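/- arXiv:2510.22377 — 4 statements merged into one kernel-verified Lean document; each statement's English description precedes it below -/
import Mathlib

section
/- Let k be a field and let w : ℕ → {a,b} be a right-infinite binary word. Let M(α₂w) be the representation obtained from the string module M(w) by enlarging V₁ with one additional basis vector y⋆ and setting α₁(y⋆) = 0 and α₂(y⋆) = x₀ (this is the string module of the string α₂w). Then M(α₂w) is a brick if and only if w(0) = b and there exists an irrational α ∈ (0,1) such that the shifted word n ↦ w(n+1) equals the characteristic word c_α of slope α; that is, if and only if w = b·w' for some characteristic word w'. -/
/-!
STATEMENT 2: Over the double-Kronecker gentle algebra, let `w : ℕ → Bool`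
(`a = false`, `b = true`) and let `M(α₂w)` be the string module of `w` with
`V₁` enlarged by one extra basis vector `y⋆` (indexed by `none`), where
`α₁(y⋆) = 0` and `α₂(y⋆) = x₀`. Then `M(α₂w)` is a brick iff `w(0) = b` and
the shift `n ↦ w(n+1)` is the characteristic word of some irrational slope
`α ∈ (0,1)`.
-/

namespace StringBricks

/-- A representation of the double-Kronecker gentle algebra. -/
structure DKRep (k : Type) [Field k] where
  V1 : Type
  V2 : Type
  V3 : Type
  [acg1 : AddCommGroup V1]
  [acg2 : AddCommGroup V2]
  [acg3 : AddCommGroup V3]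
  [mod1 : Module k V1]
  [mod2 : Module k V2]
  [mod3 : Module k V3]
  a1 : V1 →ₗ[k] V2
  a2 : V1 →ₗ[k] V2
  b1 : V2 →ₗ[k] V3
  b2 : V2 →ₗ[k] V3
  rel1 : b1.comp a1 = 0
  rel2 : b2.comp a2 = 0

attribute [instance] DKRep.acg1 DKRep.acg2 DKRep.acg3 DKRep.mod1 DKRep.mod2 DKRep.mod3

/-- A morphism of representations of the double-Kronecker gentle algebra. -/
structure DKHom {k : Type} [Field k] (M N : DKRep k) where
  f1 : M.V1 →ₗ[k] N.V1
  f2 : M.V2 →ₗ[k] N.V2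
  f3 : M.V3 →ₗ[k] N.V3
  comm_a1 : f2.comp M.a1 = N.a1.comp f1
  comm_a2 : f2.comp M.a2 = N.a2.comp f1
  comm_b1 : f3.comp M.b1 = N.b1.comp f2
  comm_b2 : f3.comp M.b2 = N.b2.comp f2

/-- A representation is a brick if every nonzero endomorphism is an isomorphism. -/
def IsBrick {k : Type} [Field k] (M : DKRep k) : Prop :=
  ∀ f : DKHom M M, (f.f1 ≠ 0 ∨ f.f2 ≠ 0 ∨ f.f3 ≠ 0) →
    Function.Bijective f.f1 ∧ Function.Bijective f.f2 ∧ Function.Bijective f.f3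

/-- The string module `M(α₂w)` of the string `α₂w`: the string module of `w`
with one extra basis vector `y⋆` (indexed by `none`) in `V₁`, where
`α₁ y⋆ = 0` and `α₂ y⋆ = x₀`. -/
noncomputable def stringModuleAlpha2 (k : Type) [Field k] (w : ℕ → Bool) : DKRep k where
  V1 := Option {i : ℕ // w i = false} →₀ k
  V2 := ℕ →₀ k
  V3 := {i : ℕ // w i = true} →₀ k
  a1 := Finsupp.lsum k fun o : Option {i : ℕ // w i = false} =>
          match o with
          | none => 0
          | some i => Finsupp.lsingle (i : ℕ)
  a2 := Finsupp.lsum k fun o : Option {i : ℕ // w i = false} =>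
          match o with
          | none => Finsupp.lsingle 0
          | some i => Finsupp.lsingle ((i : ℕ) + 1)
  b1 := Finsupp.lsum k fun i : ℕ =>
          if h : w i = true then Finsupp.lsingle (⟨i, h⟩ : {j : ℕ // w j = true}) else 0
  b2 := Finsupp.lsum k fun j : ℕ =>
          if h : 0 < j ∧ w (j - 1) = true
          then Finsupp.lsingle (⟨j - 1, h.2⟩ : {i : ℕ // w i = true}) else 0
  rel1 := by
    apply Finsupp.lhom_ext
    intro o x
    match o with
    | none => simp
    | some i => simp [i.2]
  rel2 := by
    apply Finsupp.lhom_ext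
    intro o x
    match o with
    | none => simp
    | some i => simp [i.2]

/-- The characteristic word of slope `α`. -/
noncomputable def charWord (α : ℝ) : ℕ → Bool :=
  fun n => decide (⌊((n : ℝ) + 2) * α⌋ - ⌊((n : ℝ) + 1) * α⌋ = 1)

/-!
An endomorphism of `M(α₂w)` is determined by its middle component, whose matrix coefficients
`x_n ↦ x_m` are transported along equal letters of the suffixes of `w` at `n` and `m` and vanish
where an `a` of the first meets a `b` of the second. Hence `M(α₂w)` is a brick iff the suffix at
`p` is lexicographically smaller than the suffix at `q` for every admissible pair `(p, q)`:
otherwise the graph map sending the suffix at `p` onto the suffix at `q`, as far as they agree, is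
a nonzero endomorphism that kills `x₀`.

This ordering condition makes `w` balanced (a shortest unbalanced pair of factors `b u b`, `a u a`
yields an admissible pair in the wrong order) and not eventually periodic, so by Fekete's lemma
its prefix counts are `⌊N α⌋ + 1` for an irrational slope `α`, i.e. `w = b c_α`. Conversely, for
`w = b c_α` the suffix at `p ≥ 1` is the mechanical word with intercept `{p α}`; suffixes are
ordered like their intercepts, and the intercept is at most `α` after a `b` and above `α` after
an `a`.
-/

open Finset

def suffix (w : ℕ → Bool) (p : ℕ) : Lex (ℕ → Bool) := toLex fun j => w (p + j)

def countB (w : ℕ → Bool) (i L : ℕ) : ℤ := ∑ j ∈ range L, ((w (i + j)).toNat : ℤ)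

def Balanced (w : ℕ → Bool) : Prop := ∀ L i j, countB w i L ≤ countB w j L + 1

theorem _root_.Bool.toNat_injective : Function.Injective Bool.toNat := by
  intro a b h
  cases a <;> cases b <;> simp_all

section Words

variable {w : ℕ → Bool}

theorem suffix_lt_iff {p q : ℕ} :
    suffix w p < suffix w q ↔
      ∃ i, (∀ j < i, w (p + j) = w (q + j)) ∧ w (p + i) = false ∧ w (q + i) = true := by
  simp only [← Bool.lt_iff]
  rfl

theorem suffix_eq_iff {p q : ℕ} : suffix w p = suffix w q ↔ ∀ j, w (p + j) = w (q + j) :=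
  funext_iff

theorem suffix_lt_of_succ {p q : ℕ} (h : w p = w q) (hs : suffix w (p + 1) < suffix w (q + 1)) :
    suffix w p < suffix w q := by
  obtain ⟨i, hbefore, hp, hq⟩ := suffix_lt_iff.1 hs
  refine suffix_lt_iff.2 ⟨i + 1, fun j hj => ?_, by rwa [← add_assoc, add_right_comm],
    by rwa [← add_assoc, add_right_comm]⟩
  rcases j with _ | j
  · simpa using h
  · simpa only [add_assoc, add_comm 1 j] using hbefore j (by omega)

theorem suffix_eq_of_succ {p q : ℕ} (h : w p = w q) (hs : suffix w (p + 1) = suffix w (q + 1)) :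
    suffix w p = suffix w q := by
  refine suffix_eq_iff.2 fun j => ?_
  rcases j with _ | j
  · simpa using h
  · simpa only [add_assoc, add_comm 1 j] using suffix_eq_iff.1 hs j

theorem countB_add (i a b : ℕ) : countB w i (a + b) = countB w i a + countB w (i + a) b := by
  simp only [countB, sum_range_add, add_assoc]

theorem countB_one (i : ℕ) : countB w i 1 = (w i).toNat := by
  simp [countB]

theorem countB_succ (i L : ℕ) : countB w i (L + 1) = countB w i L + (w (i + L)).toNat := by
  rw [countB_add, countB_one]

theorem countB_succ' (i L : ℕ) : countB w i (L + 1) = (w i).toNat + countB w (i + 1) L := by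
  rw [add_comm L, countB_add, countB_one]

theorem countB_add_one_add (i a b : ℕ) :
    countB w i (a + 1 + b) = countB w i a + (w (i + a)).toNat + countB w (i + a + 1) b := by
  rw [countB_add, countB_succ, add_assoc i a 1]

theorem eq_of_countB_eq_countB_succ {i L : ℕ} (h : countB w i L = countB w (i + 1) L) :
    w i = w (i + L) := by
  have h' := (countB_succ (w := w) i L).symm.trans (countB_succ' i L)
  exact Bool.toNat_injective (by exact_mod_cast (by linarith : ((w i).toNat : ℤ) = (w (i + L)).toNat))

theorem countB_nonneg (i L : ℕ) : 0 ≤ countB w i L :=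
  sum_nonneg fun _ _ => Int.natCast_nonneg _

theorem countB_le (i L : ℕ) : countB w i L ≤ L := by
  calc countB w i L ≤ ∑ _j ∈ range L, (1 : ℤ) :=
        sum_le_sum fun j _ => by exact_mod_cast Bool.toNat_le (w (i + j))
    _ = L := by simp

theorem countB_congr {i j L : ℕ} (h : ∀ t < L, w (i + t) = w (j + t)) :
    countB w i L = countB w j L :=
  sum_congr rfl fun t ht => by rw [h t (mem_range.1 ht)]

theorem exists_countB_add_one_eq_of_suffix_lt {p q : ℕ} (h : suffix w p < suffix w q) :
    ∃ i, (∀ j < i, w (p + j) = w (q + j)) ∧ countB w p (i + 1) + 1 = countB w q (i + 1) := by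
  obtain ⟨i, hbefore, hp, hq⟩ := suffix_lt_iff.1 h
  refine ⟨i, hbefore, ?_⟩
  rw [countB_succ, countB_succ, countB_congr hbefore, hp, hq]
  simp

theorem Balanced.countB_le_of_suffix_lt (hw : Balanced w) {p q : ℕ}
    (h : suffix w p < suffix w q) (L : ℕ) : countB w p L ≤ countB w q L := by
  obtain ⟨i, hbefore, hcount⟩ := exists_countB_add_one_eq_of_suffix_lt h
  rcases le_or_gt L i with hL | hL
  · exact (countB_congr fun t ht => hbefore t (by omega)).le
  · obtain ⟨R, rfl⟩ : ∃ R, L = i + 1 + R := ⟨L - (i + 1), by omega⟩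
    rw [countB_add p (i + 1) R, countB_add q (i + 1) R]
    linarith [hw R (p + (i + 1)) (q + (i + 1))]

end Words

/-- The pairs `(p, q)` for which a graph map of `M(α₂w)` can send `x_p` to `x_q`: the letter before
`x_q` must be an `a` (the arrow `α₂` when `q = 0`), and the letter before `x_p` a `b`, except when
`q = 0`, where an `a` before `x_p` is matched by `y_{p-1} ↦ y⋆`. -/
def AdmissiblePair (w : ℕ → Bool) (p q : ℕ) : Prop :=
  p ≠ 0 ∧ (q = 0 ∨ (q ≠ 0 ∧ w (p - 1) = true ∧ w (q - 1) = false))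

def SuffixesOrdered (w : ℕ → Bool) : Prop :=
  ∀ p q, AdmissiblePair w p q → suffix w p < suffix w q

namespace SuffixesOrdered

variable {w : ℕ → Bool} (H : SuffixesOrdered w)
include H

theorem head_eq_true : w 0 = true := by
  by_contra h0
  obtain ⟨i, hbefore, -, hi⟩ :=
    suffix_lt_iff.1 (H 1 0 ⟨one_ne_zero, Or.inl rfl⟩)
  have hfalse : ∀ j ≤ i, w j = false := by
    intro j hj
    induction j with
    | zero => simpa using h0
    | succ j ih => rw [add_comm, hbefore j (by omega)]; simpa using ih (by omega)
  simp [hfalse i le_rfl] at hi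

theorem suffix_injective : Function.Injective (suffix w) := by
  suffices ∀ a b, a < b → suffix w a ≠ suffix w b by
    intro a b hab
    by_contra hne
    rcases lt_or_gt_of_ne hne with h | h
    exacts [this a b h hab, this b a h hab.symm]
  intro a
  induction a with
  | zero =>
    intro b hb heq
    exact (H b 0 ⟨hb.ne', Or.inl rfl⟩).ne' heq
  | succ a ih =>
    intro b hab heq
    obtain ⟨b, rfl⟩ : ∃ b', b = b' + 1 := ⟨b - 1, by omega⟩
    by_cases hab' : w a = w b
    · exact ih b (by omega) (suffix_eq_of_succ hab' heq)
    cases ha : w a <;> cases hb : w b <;> simp only [ha, hb, not_true] at hab'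
    · exact (H (b + 1) (a + 1) ⟨by omega, Or.inr ⟨by omega, by simpa, by simpa⟩⟩).ne' heq
    · exact (H (a + 1) (b + 1) ⟨by omega, Or.inr ⟨by omega, by simpa, by simpa⟩⟩).ne heq

end SuffixesOrdered

section Balance

variable {w : ℕ → Bool}

theorem agree_of_balanced_below {M i j : ℕ}
    (hbal : ∀ L < M + 2, ∀ i j, countB w i L ≤ countB w j L + 1)
    (hi : w i = true) (hj : w j = false) (hi' : w (i + 1 + M) = true)
    (hj' : w (j + 1 + M) = false) (hmid : countB w (i + 1) M = countB w (j + 1) M) :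
    ∀ t < M, w (i + 1 + t) = w (j + 1 + t) := by
  intro t
  induction t using Nat.strong_induction_on with
  | _ t ih =>
  intro ht
  have hbefore : countB w (i + 1) t = countB w (j + 1) t :=
    countB_congr fun s hs => ih s hs (by omega)
  by_contra hne
  cases ha : w (i + 1 + t) <;> cases hb : w (j + 1 + t) <;> simp only [ha, hb, not_true] at hne
  · obtain ⟨R, rfl⟩ : ∃ R, M = t + 1 + R := ⟨M - (t + 1), by omega⟩
    have htail := hbal (R + 1) (by omega) (i + 1 + t + 1) (j + 1 + t + 1)
    rw [countB_add_one_add, ha] at hmid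
    rw [countB_add_one_add, hb] at hmid
    rw [countB_succ, countB_succ, show i + 1 + t + 1 + R = i + 1 + (t + 1 + R) by ring,
      show j + 1 + t + 1 + R = j + 1 + (t + 1 + R) by ring, hi', hj'] at htail
    simp only [Bool.toNat_false, Bool.toNat_true, Nat.cast_zero, Nat.cast_one] at hmid htail
    omega
  · have hhead := hbal (t + 2) (by omega) i j
    rw [countB_succ', countB_succ, countB_succ', countB_succ, hi, hj, ha, hb] at hhead
    simp only [Bool.toNat_false, Bool.toNat_true, Nat.cast_zero, Nat.cast_one] at hhead
    omega

/-- A shortest pair of windows whose counts differ by `2` has the form `b u b`, `a u a`; then the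
suffixes starting with `u b` and `u a` form an admissible pair in the wrong order. -/
theorem SuffixesOrdered.balanced (H : SuffixesOrdered w) : Balanced w := by
  intro L
  induction L using Nat.strong_induction_on with
  | _ L ih =>
  intro i j
  by_contra! hlt
  obtain ⟨M, rfl⟩ : ∃ M, L = M + 1 + 1 :=
    ⟨L - 2, by have := countB_le (w := w) i L; have := countB_nonneg (w := w) j L; omega⟩
  have hshift := ih (M + 1) (by omega) (i + 1) (j + 1)
  have hhead := ih (M + 1) (by omega) i j
  have hi2 : countB w i (M + 1 + 1) = (w i).toNat + countB w (i + 1) M + (w (i + 1 + M)).toNat := by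
    rw [countB_succ', countB_succ]; ring
  have hj2 : countB w j (M + 1 + 1) = (w j).toNat + countB w (j + 1) M + (w (j + 1 + M)).toNat := by
    rw [countB_succ', countB_succ]; ring
  rw [countB_succ' i, countB_succ' j] at hhead
  rw [countB_succ, countB_succ] at hshift
  have := Bool.toNat_le (w i); have := Bool.toNat_le (w j)
  have := Bool.toNat_le (w (i + 1 + M)); have := Bool.toNat_le (w (j + 1 + M))
  have hi : w i = true := Bool.toNat_eq_one.1 (by omega)
  have hj : w j = false := Bool.toNat_eq_zero.1 (by omega)
  have hi' : w (i + 1 + M) = true := Bool.toNat_eq_one.1 (by omega)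
  have hj' : w (j + 1 + M) = false := Bool.toNat_eq_zero.1 (by omega)
  have hmid := agree_of_balanced_below ih hi hj hi' hj' (by omega)
  refine (H (i + 1) (j + 1) ⟨by omega, Or.inr ⟨by omega, by simpa, by simpa⟩⟩).asymm ?_
  exact suffix_lt_iff.2 ⟨M, fun t ht => (hmid t ht).symm, hj', hi'⟩

end Balance

/-- Fekete's lemma applied to `u` and to `c - u`. -/
theorem exists_slope_of_almost_additive {u : ℕ → ℝ} {c : ℝ} (hsub : Subadditive u)
    (hsup : ∀ m n, u m + u n ≤ u (m + n) + c) (hnonneg : ∀ n, 0 ≤ u n) (hle : ∀ n, u n ≤ n) :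
    ∃ α : ℝ, ∀ n ≠ 0, u n - c ≤ n * α ∧ n * α ≤ u n := by
  have hc : 0 ≤ c := by linarith [hsup 0 0, hnonneg 0]
  have hsub' : Subadditive fun n => c - u n := fun m n => by linarith [hsup m n]
  have hbdd : BddBelow (Set.range fun n : ℕ => u n / n) :=
    ⟨0, by rintro _ ⟨n, rfl⟩; exact div_nonneg (hnonneg n) n.cast_nonneg⟩
  have hbdd' : BddBelow (Set.range fun n : ℕ => (c - u n) / n) := by
    refine ⟨-1, ?_⟩
    rintro _ ⟨n, rfl⟩
    rcases eq_or_ne n 0 with rfl | hn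
    · simp
    · rw [le_div_iff₀ (by positivity)]
      linarith [hle n]
  have hlim : hsub'.lim = -hsub.lim := by
    refine tendsto_nhds_unique (hsub'.tendsto_lim hbdd') ?_
    simpa [sub_div] using (tendsto_const_div_atTop_nhds_zero_nat c).sub (hsub.tendsto_lim hbdd)
  refine ⟨hsub.lim, fun n hn => ⟨?_, ?_⟩⟩
  · have h := hsub'.lim_le_div hbdd' hn
    rw [hlim, le_div_iff₀ (by positivity)] at h
    linarith
  · have h := hsub.lim_le_div hbdd hn
    rwa [le_div_iff₀ (by positivity), mul_comm] at h

def HasSlope (w : ℕ → Bool) (α : ℝ) : Prop :=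
  ∀ N ≠ 0, (countB w 0 N : ℝ) - 1 ≤ N * α ∧ N * α ≤ countB w 0 N

namespace SuffixesOrdered

variable {w : ℕ → Bool} (H : SuffixesOrdered w)
include H

theorem countB_le_countB_zero (i L : ℕ) : countB w i L ≤ countB w 0 L := by
  rcases eq_or_ne i 0 with rfl | hi
  · rfl
  · exact H.balanced.countB_le_of_suffix_lt (H i 0 ⟨hi, Or.inl rfl⟩) L

theorem exists_hasSlope : ∃ α, HasSlope w α := by
  refine exists_slope_of_almost_additive (fun m n => ?_) (fun m n => ?_)
    (fun n => by exact_mod_cast countB_nonneg 0 n) (fun n => by exact_mod_cast countB_le 0 n)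
  · have := H.countB_le_countB_zero m n
    rw [countB_add, zero_add]
    exact_mod_cast (by linarith : countB w 0 m + countB w m n ≤ countB w 0 m + countB w 0 n)
  · have := H.balanced n 0 m
    rw [countB_add, zero_add]
    exact_mod_cast (by linarith : countB w 0 m + countB w 0 n ≤ countB w 0 m + countB w m n + 1)

end SuffixesOrdered

theorem _root_.Rat.natCast_mul_ne_intCast {ρ : ℚ} {N : ℕ} (hN : ¬ ρ.den ∣ N) (z : ℤ) :
    (N : ℝ) * ρ ≠ z := by
  intro h
  have hq : (N : ℚ) * ρ = z := by exact_mod_cast h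
  have hz : (N : ℤ) * ρ.num = z * ρ.den := by
    have := congrArg (· * (ρ.den : ℚ)) hq
    simp only [mul_assoc, Rat.mul_den_eq_num] at this
    exact_mod_cast this
  have hdvd : ρ.den ∣ N * ρ.num.natAbs := by
    have : (ρ.den : ℤ) ∣ N * ρ.num := ⟨z, by rw [hz, mul_comm]⟩
    simpa [Int.natAbs_mul] using Int.natCast_dvd.1 this
  exact hN (ρ.reduced.symm.dvd_of_dvd_mul_right hdvd)

theorem exists_forall_ge_eq_of_monotone {f : ℕ → ℤ} (hf : Monotone f)
    (hbdd : BddAbove (Set.range f)) : ∃ K, ∀ k ≥ K, f k = f K := by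
  obtain ⟨K, hK⟩ := Int.csSup_mem (Set.range_nonempty f) hbdd
  exact ⟨K, fun k hk => le_antisymm (hK ▸ le_csSup hbdd ⟨k, rfl⟩) (hf hk)⟩

namespace HasSlope

variable {w : ℕ → Bool} {α : ℝ} (hα : HasSlope w α)
include hα

theorem floor_eq {N : ℕ} (hN : N ≠ 0) (hnot : ∀ z : ℤ, (N : ℝ) * α ≠ z) :
    ⌊(N : ℝ) * α⌋ = countB w 0 N - 1 := by
  rw [Int.floor_eq_iff]
  push_cast
  exact ⟨(hα N hN).1, by linarith [lt_of_le_of_ne (hα N hN).2 (hnot _)]⟩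

theorem countB_eq_of_mul_eq_intCast {N T : ℕ} {r : ℤ} (hN : N ≠ 0)
    (hT : (T : ℝ) * α = r) (hnot : ∀ z : ℤ, (N : ℝ) * α ≠ z) : countB w N T = r := by
  have hsum : ((N + T : ℕ) : ℝ) * α = N * α + r := by push_cast; rw [add_mul, hT]
  have hnot' : ∀ z : ℤ, ((N + T : ℕ) : ℝ) * α ≠ z := fun z h =>
    hnot (z - r) (by push_cast; linarith)
  have h1 := hα.floor_eq hN hnot
  have h2 := hα.floor_eq (by omega) hnot'
  rw [hsum, Int.floor_add_intCast, countB_add, zero_add] at h2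
  omega

end HasSlope

/-- The excess of the prefix count at `(k + 1) s` over `(k + 1) r` lies in `{0, 1}` and is
monotone, since all the windows `countB w ((k + 1) s) s` lie on the same side of `r`. -/
theorem SuffixesOrdered.exists_forall_ge_countB_eq {w : ℕ → Bool} {α : ℝ} (H : SuffixesOrdered w)
    (hα : HasSlope w α) {s : ℕ} {r : ℤ} (hs : s ≠ 0) (hsr : (s : ℝ) * α = r) :
    ∃ K, ∀ k ≥ K, countB w ((k + 1) * s) s = r := by
  obtain ⟨e, he⟩ : ∃ e : ℕ → ℤ, ∀ k, e k = countB w 0 ((k + 1) * s) - (k + 1) * r :=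
    ⟨_, fun _ => rfl⟩
  have he01 : ∀ k, 0 ≤ e k ∧ e k ≤ 1 := fun k => by
    obtain ⟨h1, h2⟩ := hα ((k + 1) * s) (by positivity)
    have hmul : (((k + 1) * s : ℕ) : ℝ) * α = ((k + 1) * r : ℤ) := by
      push_cast; rw [mul_assoc, hsr]
    rw [hmul] at h1 h2
    have h1' : countB w 0 ((k + 1) * s) - 1 ≤ (k + 1) * r := by exact_mod_cast h1
    have h2' : (k + 1) * r ≤ countB w 0 ((k + 1) * s) := by exact_mod_cast h2
    rw [he]; omega
  have hstep : ∀ k, e (k + 1) = e k + (countB w ((k + 1) * s) s - r) := fun k => by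
    rw [he, he, show (k + 1 + 1) * s = (k + 1) * s + s by ring, countB_add, zero_add]
    push_cast; ring
  have hwindow : ∀ k, countB w 0 s - 1 ≤ countB w ((k + 1) * s) s ∧
      countB w ((k + 1) * s) s ≤ countB w 0 s :=
    fun k => ⟨by linarith [H.balanced s 0 ((k + 1) * s)], H.countB_le_countB_zero _ s⟩
  have he0 : countB w 0 s = r + e 0 := by rw [he]; simp
  have hmono : Monotone e ∨ Monotone fun k => -e k := by
    rcases (he01 0).2.eq_or_lt with h1 | h0
    · exact Or.inl (monotone_nat_of_le_succ fun k => by linarith [hstep k, (hwindow k).1])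
    · refine Or.inr (monotone_nat_of_le_succ fun k => ?_)
      have := (he01 0).1
      simp only [neg_le_neg_iff]
      linarith [hstep k, (hwindow k).2]
  obtain ⟨K, hK⟩ : ∃ K, ∀ k ≥ K, e k = e K := by
    rcases hmono with hmono | hmono
    · exact exists_forall_ge_eq_of_monotone hmono ⟨1, by rintro _ ⟨k, rfl⟩; exact (he01 k).2⟩
    · obtain ⟨K, hK⟩ := exists_forall_ge_eq_of_monotone hmono
        ⟨0, by rintro _ ⟨k, rfl⟩; simp only; linarith [(he01 k).1]⟩
      exact ⟨K, fun k hk => neg_inj.1 (hK k hk)⟩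
  refine ⟨K, fun k hk => ?_⟩
  have := hstep k
  rw [hK (k + 1) (by omega), hK k hk] at this
  omega

theorem SuffixesOrdered.irrational_of_hasSlope {w : ℕ → Bool} {α : ℝ} (H : SuffixesOrdered w)
    (hα : HasSlope w α) : Irrational α := by
  rintro ⟨ρ, rfl⟩
  set s := ρ.den
  have hs : s ≠ 0 := ρ.den_nz
  have hsr : (s : ℝ) * ρ = ρ.num := by exact_mod_cast Rat.den_mul_eq_num ρ
  obtain ⟨K, hK⟩ := H.exists_forall_ge_countB_eq hα hs hsr
  have hcount : ∀ N ≥ (K + 1) * s, countB w N s = ρ.num := by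
    intro N hN
    by_cases hdvd : s ∣ N
    · obtain ⟨m, rfl⟩ := hdvd
      rw [mul_comm] at hN ⊢
      have hm : K + 1 ≤ m := Nat.le_of_mul_le_mul_right hN (Nat.pos_of_ne_zero hs)
      obtain ⟨k, rfl⟩ : ∃ k, m = k + 1 := ⟨m - 1, by omega⟩
      exact hK k (by omega)
    · exact hα.countB_eq_of_mul_eq_intCast (fun h => hdvd (h ▸ dvd_zero s)) hsr
        (Rat.natCast_mul_ne_intCast hdvd)
  have hperiodic : suffix w ((K + 1) * s) = suffix w ((K + 1) * s + s) := by
    refine suffix_eq_iff.2 fun j => ?_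
    rw [add_right_comm]
    exact eq_of_countB_eq_countB_succ
      ((hcount _ (by omega)).trans (hcount _ (by omega)).symm)
  exact absurd (H.suffix_injective hperiodic) (by omega)

section CharWord

variable {w : ℕ → Bool} {α : ℝ}

theorem charWord_toNat (h0 : 0 ≤ α) (h1 : α ≤ 1) (n : ℕ) :
    ((charWord α n).toNat : ℤ) = ⌊((n : ℝ) + 2) * α⌋ - ⌊((n : ℝ) + 1) * α⌋ := by
  have hle : ⌊((n : ℝ) + 1) * α⌋ ≤ ⌊((n : ℝ) + 2) * α⌋ := Int.floor_le_floor (by nlinarith)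
  have hle' : ⌊((n : ℝ) + 2) * α⌋ ≤ ⌊((n : ℝ) + 1) * α⌋ + 1 := by
    rw [← Int.floor_add_one]; exact Int.floor_le_floor (by nlinarith)
  unfold charWord
  rcases (by omega : ⌊((n : ℝ) + 2) * α⌋ - ⌊((n : ℝ) + 1) * α⌋ = 0 ∨
      ⌊((n : ℝ) + 2) * α⌋ - ⌊((n : ℝ) + 1) * α⌋ = 1) with h | h <;> simp [h]

variable (h0 : 0 < α) (h1 : α < 1) (hw : ∀ n, w (n + 1) = charWord α n)
include h0 h1 hw

theorem countB_eq_floor {p : ℕ} (hp : p ≠ 0) (L : ℕ) :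
    countB w p L = ⌊Int.fract (p * α) + L * α⌋ := by
  have htele : countB w p L = ⌊((p + L : ℕ) : ℝ) * α⌋ - ⌊(p : ℝ) * α⌋ := by
    induction L with
    | zero => simp [countB]
    | succ L ih =>
      obtain ⟨m, hm⟩ : ∃ m, p + L = m + 1 := ⟨p + L - 1, by omega⟩
      rw [countB_succ, ih, hm, hw, charWord_toNat h0.le h1.le, ← add_assoc, hm]
      push_cast; ring_nf
  rw [htele, ← Int.self_sub_floor, ← Int.floor_sub_intCast]
  push_cast; ring_nf

theorem fract_mul_succ {m : ℕ} (hm : m ≠ 0) :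
    Int.fract (((m + 1 : ℕ) : ℝ) * α) = Int.fract (m * α) + α - (w m).toNat := by
  have hbit := countB_eq_floor h0 h1 hw hm 1
  rw [countB_one, Nat.cast_one, one_mul] at hbit
  have hsplit : ((m + 1 : ℕ) : ℝ) * α = ⌊(m : ℝ) * α⌋ + (Int.fract (m * α) + α) := by
    push_cast; rw [add_mul, one_mul]; linarith [Int.floor_add_fract ((m : ℝ) * α)]
  rw [hsplit, Int.fract_intCast_add, (by exact_mod_cast hbit :
    ((w m).toNat : ℝ) = ((⌊Int.fract ((m : ℝ) * α) + α⌋ : ℤ) : ℝ)),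
    Int.self_sub_floor]

theorem suffix_ne_of_irrational (hirr : Irrational α) {p q : ℕ} (hp : p ≠ 0) (hpq : p < q) :
    suffix w p ≠ suffix w q := by
  intro heq
  obtain ⟨T, rfl⟩ : ∃ T, q = p + T := ⟨q - p, by omega⟩
  have hT : T ≠ 0 := by omega
  have hshift : ∀ L, countB w p (T + L) = countB w p T + countB w p L := fun L => by
    rw [countB_add, countB_congr fun t _ => (suffix_eq_iff.1 heq t).symm]
  have hmul : ∀ k : ℕ, countB w p (k * T) = k * countB w p T := by
    intro k
    induction k with
    | zero => simp [countB]
    | succ k ih => rw [add_mul, one_mul, add_comm, hshift, ih]; push_cast; ring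
  have hnear : ∀ L : ℕ, |(countB w p L : ℝ) - L * α| < 1 := fun L => by
    rw [countB_eq_floor h0 h1 hw hp, abs_lt]
    have := Int.fract_nonneg ((p : ℝ) * α)
    have := Int.fract_lt_one ((p : ℝ) * α)
    constructor <;> linarith [Int.floor_le (Int.fract ((p : ℝ) * α) + L * α),
      Int.lt_floor_add_one (Int.fract ((p : ℝ) * α) + L * α)]
  set x := (countB w p T : ℝ) - T * α
  have hx : x ≠ 0 := sub_ne_zero.2 ((hirr.natCast_mul hT).ne_int _).symm
  obtain ⟨k, hk⟩ := exists_nat_gt (1 / |x|)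
  have := hnear (k * T)
  rw [hmul, show ((k * countB w p T : ℤ) : ℝ) - ((k * T : ℕ) : ℝ) * α = k * x by
    push_cast; ring, abs_mul, Nat.abs_cast] at this
  rw [div_lt_iff₀ (abs_pos.2 hx)] at hk
  linarith

theorem suffix_lt_of_fract_lt (hirr : Irrational α) {p q : ℕ} (hp : p ≠ 0) (hq : q ≠ 0)
    (h : Int.fract (p * α) < Int.fract (q * α)) : suffix w p < suffix w q := by
  have hcount : ∀ L, countB w p L ≤ countB w q L := fun L => by
    rw [countB_eq_floor h0 h1 hw hp, countB_eq_floor h0 h1 hw hq]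
    exact Int.floor_le_floor (by linarith)
  rcases lt_trichotomy (suffix w p) (suffix w q) with hlt | heq | hgt
  · exact hlt
  · rcases lt_or_gt_of_ne (show p ≠ q by rintro rfl; exact h.false) with hpq | hpq
    · exact absurd heq (suffix_ne_of_irrational h0 h1 hw hirr hp hpq)
    · exact absurd heq.symm (suffix_ne_of_irrational h0 h1 hw hirr hq hpq)
  · obtain ⟨i, -, hi⟩ := exists_countB_add_one_eq_of_suffix_lt hgt
    linarith [hcount (i + 1)]

theorem fract_mul_succ_lt {m : ℕ} (hm : m ≠ 0) (hwm : w m = true) :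
    Int.fract (((m + 1 : ℕ) : ℝ) * α) < α := by
  rw [fract_mul_succ h0 h1 hw hm, hwm]
  linarith [Int.fract_lt_one ((m : ℝ) * α), show ((true.toNat : ℕ) : ℝ) = 1 by simp]

theorem lt_fract_mul_succ (hirr : Irrational α) {m : ℕ} (hm : m ≠ 0) (hwm : w m = false) :
    α < Int.fract (((m + 1 : ℕ) : ℝ) * α) := by
  rw [fract_mul_succ h0 h1 hw hm, hwm]
  simpa [Int.fract_pos] using (hirr.natCast_mul hm).ne_int _

theorem suffixesOrdered_of_charWord (hirr : Irrational α) (hw0 : w 0 = true) :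
    SuffixesOrdered w := by
  have hfract_one : Int.fract (((1 : ℕ) : ℝ) * α) = α := by
    simpa using Int.fract_eq_self.2 ⟨h0.le, h1⟩
  rintro p q ⟨hp, rfl | ⟨hq, hbp, haq⟩⟩
  · cases hwp : w p
    · exact suffix_lt_iff.2 ⟨0, by simp, by simpa, by simpa⟩
    · refine suffix_lt_of_succ (hwp.trans hw0.symm) ?_
      refine suffix_lt_of_fract_lt h0 h1 hw hirr (by omega) one_ne_zero ?_
      rw [zero_add, hfract_one]
      exact fract_mul_succ_lt h0 h1 hw hp hwp
  · obtain ⟨p, rfl⟩ : ∃ p', p = p' + 1 := ⟨p - 1, by omega⟩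
    obtain ⟨q, rfl⟩ : ∃ q', q = q' + 1 := ⟨q - 1, by omega⟩
    simp only [Nat.add_sub_cancel] at hbp haq
    have hq' : q ≠ 0 := by rintro rfl; simp [hw0] at haq
    refine suffix_lt_of_fract_lt h0 h1 hw hirr hp hq (lt_of_le_of_lt ?_
      (lt_fract_mul_succ h0 h1 hw hirr hq' haq))
    rcases eq_or_ne p 0 with rfl | hp'
    · exact hfract_one.le
    · exact (fract_mul_succ_lt h0 h1 hw hp' hbp).le

end CharWord

theorem SuffixesOrdered.exists_charWord {w : ℕ → Bool} (H : SuffixesOrdered w) :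
    ∃ α : ℝ, Irrational α ∧ 0 < α ∧ α < 1 ∧ (fun n => w (n + 1)) = charWord α := by
  obtain ⟨α, hα⟩ := H.exists_hasSlope
  have hirr := H.irrational_of_hasSlope hα
  have hfloor : ∀ N : ℕ, N ≠ 0 → ⌊(N : ℝ) * α⌋ = countB w 0 N - 1 := fun N hN =>
    hα.floor_eq hN fun z => (hirr.natCast_mul hN).ne_int z
  have h01 := hα 1 one_ne_zero
  rw [countB_one, H.head_eq_true] at h01
  norm_num at h01
  have h0 : 0 < α := lt_of_le_of_ne h01.1 hirr.ne_zero.symm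
  have h1 : α < 1 := lt_of_le_of_ne h01.2 hirr.ne_one
  refine ⟨α, hirr, h0, h1, funext fun n => Bool.toNat_injective ?_⟩
  have h2 : ⌊((n : ℝ) + 2) * α⌋ = countB w 0 (n + 1 + 1) - 1 := by
    convert hfloor (n + 1 + 1) (by omega) using 3; push_cast; ring
  have h3 : ⌊((n : ℝ) + 1) * α⌋ = countB w 0 (n + 1) - 1 := by
    convert hfloor (n + 1) (by omega) using 3; push_cast; ring
  suffices ((w (n + 1)).toNat : ℤ) = (charWord α n).toNat by exact_mod_cast this
  rw [charWord_toNat h0.le h1.le, h2, h3, countB_succ, zero_add]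
  ring

theorem suffixesOrdered_iff_charWord {w : ℕ → Bool} :
    SuffixesOrdered w ↔ w 0 = true ∧ ∃ α : ℝ, Irrational α ∧ 0 < α ∧ α < 1 ∧
      (fun n => w (n + 1)) = charWord α := by
  refine ⟨fun H => ⟨H.head_eq_true, H.exists_charWord⟩, ?_⟩
  rintro ⟨hw0, α, hirr, h0, h1, hw⟩
  exact suffixesOrdered_of_charWord h0 h1 (fun n => congrFun hw n) hirr hw0

theorem DKRep.isBrick_of_forall_f2_eq_smul {k : Type} [Field k] {M : DKRep k}
    (hinj : ∀ v, M.a1 v = 0 → M.a2 v = 0 → v = 0) (hsurj : Function.Surjective M.b1)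
    (hscalar : ∀ f : DKHom M M, ∃ t : k, f.f2 = t • LinearMap.id) : IsBrick M := by
  intro f hf
  obtain ⟨t, ht2⟩ := hscalar f
  have ht1 : f.f1 = t • LinearMap.id := by
    ext v
    refine sub_eq_zero.1 (hinj _ ?_ ?_)
    · have := LinearMap.congr_fun f.comm_a1 v
      simp_all
    · have := LinearMap.congr_fun f.comm_a2 v
      simp_all
  have ht3 : f.f3 = t • LinearMap.id := by
    ext z
    obtain ⟨u, rfl⟩ := hsurj z
    have := LinearMap.congr_fun f.comm_b1 u
    simp_all
  have ht : t ≠ 0 := by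
    rintro rfl
    simp_all
  have hbij : ∀ (V : Type) [AddCommGroup V] [Module k V],
      Function.Bijective (t • LinearMap.id : V →ₗ[k] V) :=
    fun V _ _ => (LinearEquiv.smulOfNeZero k V t ht).bijective
  rw [ht1, ht2, ht3]
  exact ⟨hbij _, hbij _, hbij _⟩

section StringModule

variable (k : Type) [Field k] (w : ℕ → Bool)

-- The structure maps of `stringModuleAlpha2 k w` at their concrete `Finsupp` types.
noncomputable def A₁ : (Option {i : ℕ // w i = false} →₀ k) →ₗ[k] ℕ →₀ k :=
  (stringModuleAlpha2 k w).a1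

noncomputable def A₂ : (Option {i : ℕ // w i = false} →₀ k) →ₗ[k] ℕ →₀ k :=
  (stringModuleAlpha2 k w).a2

noncomputable def B₁ : (ℕ →₀ k) →ₗ[k] {i : ℕ // w i = true} →₀ k :=
  (stringModuleAlpha2 k w).b1

noncomputable def B₂ : (ℕ →₀ k) →ₗ[k] {i : ℕ // w i = true} →₀ k :=
  (stringModuleAlpha2 k w).b2

variable {k w}

@[simp] theorem A₁_single_none (c : k) : A₁ k w (Finsupp.single none c) = 0 := by
  simp [A₁, stringModuleAlpha2]

@[simp] theorem A₁_single_some (i : {i : ℕ // w i = false}) (c : k) :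
    A₁ k w (Finsupp.single (some i) c) = Finsupp.single (i : ℕ) c := by
  simp [A₁, stringModuleAlpha2]

@[simp] theorem A₂_single_none (c : k) : A₂ k w (Finsupp.single none c) = Finsupp.single 0 c := by
  simp [A₂, stringModuleAlpha2]

@[simp] theorem A₂_single_some (i : {i : ℕ // w i = false}) (c : k) :
    A₂ k w (Finsupp.single (some i) c) = Finsupp.single ((i : ℕ) + 1) c := by
  simp [A₂, stringModuleAlpha2]

theorem B₁_single (n : ℕ) (c : k) :
    B₁ k w (Finsupp.single n c) = if h : w n = true then Finsupp.single ⟨n, h⟩ c else 0 := by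
  simp only [B₁, stringModuleAlpha2, Finsupp.lsum_single]
  split_ifs <;> simp

@[simp] theorem B₂_single_zero (c : k) : B₂ k w (Finsupp.single 0 c) = 0 := by
  simp [B₂, stringModuleAlpha2]

theorem B₂_single_succ (n : ℕ) (c : k) :
    B₂ k w (Finsupp.single (n + 1) c) = if h : w n = true then Finsupp.single ⟨n, h⟩ c else 0 := by
  simp only [B₂, stringModuleAlpha2, Finsupp.lsum_single, Nat.add_sub_cancel, Nat.succ_pos,
    true_and]
  split_ifs <;> simp

theorem A₁_apply_of_true (v : Option {i : ℕ // w i = false} →₀ k) {m : ℕ} (hm : w m = true) :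
    A₁ k w v m = 0 := by
  induction v using Finsupp.induction_linear with
  | zero => simp
  | add f g hf hg => simp [hf, hg]
  | single o c =>
    rcases o with _ | ⟨i, hi⟩
    · simp
    · simp only [A₁_single_some, Finsupp.single_apply, ite_eq_right_iff]
      rintro rfl
      simp_all

theorem A₁_apply_of_false (v : Option {i : ℕ // w i = false} →₀ k) {m : ℕ} (hm : w m = false) :
    A₁ k w v m = v (some ⟨m, hm⟩) := by
  induction v using Finsupp.induction_linear with
  | zero => simp
  | add f g hf hg => simp [hf, hg]
  | single o c =>
    rcases o with _ | ⟨i, hi⟩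
    · simp
    · simp [Finsupp.single_apply]

theorem A₂_apply_zero (v : Option {i : ℕ // w i = false} →₀ k) : A₂ k w v 0 = v none := by
  induction v using Finsupp.induction_linear with
  | zero => simp
  | add f g hf hg => simp [hf, hg]
  | single o c => rcases o with _ | ⟨i, hi⟩ <;> simp

theorem A₂_apply_succ (v : Option {i : ℕ // w i = false} →₀ k) (m : ℕ) :
    A₂ k w v (m + 1) = A₁ k w v m := by
  induction v using Finsupp.induction_linear with
  | zero => simp
  | add f g hf hg => simp [hf, hg]
  | single o c => rcases o with _ | ⟨i, hi⟩ <;> simp [Finsupp.single_apply]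

theorem B₁_apply (u : ℕ →₀ k) (z : {i : ℕ // w i = true}) : B₁ k w u z = u z := by
  induction u using Finsupp.induction_linear with
  | zero => simp
  | add f g hf hg => simp [hf, hg]
  | single n c =>
    rw [B₁_single]
    split_ifs with hn
    · simp [Finsupp.single_apply, Subtype.ext_iff]
    · have : n ≠ z := fun h => hn (h ▸ z.2)
      simp [this]

theorem B₂_apply (u : ℕ →₀ k) (z : {i : ℕ // w i = true}) : B₂ k w u z = u (z + 1) := by
  induction u using Finsupp.induction_linear with
  | zero => simp
  | add f g hf hg => simp [hf, hg]
  | single n c =>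
    rcases n with _ | n
    · simp
    · rw [B₂_single_succ]
      split_ifs with hn
      · simp [Finsupp.single_apply, Subtype.ext_iff]
      · have : n ≠ z := fun h => hn (h ▸ z.2)
        simp [this]

theorem eq_zero_of_A₁_eq_zero_of_A₂_eq_zero (v : Option {i : ℕ // w i = false} →₀ k)
    (h₁ : A₁ k w v = 0) (h₂ : A₂ k w v = 0) : v = 0 := by
  ext (_ | ⟨m, hm⟩)
  · simpa [h₂] using (A₂_apply_zero v).symm
  · simpa [h₁] using (A₁_apply_of_false v hm).symm

theorem B₁_surjective : Function.Surjective (B₁ k w) := by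
  intro u
  induction u using Finsupp.induction_linear with
  | zero => exact ⟨0, map_zero _⟩
  | add f g hf hg =>
    obtain ⟨x, rfl⟩ := hf
    obtain ⟨y, rfl⟩ := hg
    exact ⟨x + y, map_add _ x y⟩
  | single z c => exact ⟨Finsupp.single z c, by rw [B₁_single, dif_pos z.2]⟩

end StringModule

theorem not_suffix_lt_of_ne_zero {w : ℕ → Bool} {R : Type*} [Zero R] {c : ℕ → ℕ → R}
    (hab : ∀ n m, w n = false → w m = true → c n m = 0)
    (ha : ∀ n m, w n = false → c (n + 1) (m + 1) = c n m)
    (hb : ∀ n m, w n = true → w m = true → c (n + 1) (m + 1) = c n m)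
    {p q : ℕ} (hpq : c p q ≠ 0) : ¬ suffix w p < suffix w q := by
  intro hlt
  obtain ⟨i, hbefore, hp, hq⟩ := suffix_lt_iff.1 hlt
  have hshift : ∀ j ≤ i, c (p + j) (q + j) = c p q := by
    intro j hj
    induction j with
    | zero => rfl
    | succ j ih =>
      rw [← ih (by omega), ← add_assoc, ← add_assoc]
      cases hwp : w (p + j)
      · exact ha _ _ hwp
      · exact hb _ _ hwp (by rw [← hbefore j (by omega), hwp])
  exact hpq (hshift i le_rfl ▸ hab _ _ hp hq)

theorem SuffixesOrdered.eq_zero_of_recurrence {w : ℕ → Bool} (H : SuffixesOrdered w)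
    {R : Type*} [Zero R] {c : ℕ → ℕ → R} (h0 : ∀ m, c 0 m = 0)
    (hab : ∀ n m, w n = false → w m = true → c n m = 0)
    (ha : ∀ n m, w n = false → c (n + 1) (m + 1) = c n m)
    (hb : ∀ n m, w n = true → w m = true → c (n + 1) (m + 1) = c n m) (n m : ℕ) :
    c n m = 0 := by
  induction n generalizing m with
  | zero => exact h0 m
  | succ n ih =>
    by_contra hne
    have hnlt := not_suffix_lt_of_ne_zero hab ha hb hne
    rcases m with _ | m
    · exact hnlt (H _ _ ⟨n.succ_ne_zero, Or.inl rfl⟩)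
    · cases hwn : w n
      · exact hne ((ha _ _ hwn).trans (ih m))
      · cases hwm : w m
        · exact hnlt (H _ _ ⟨n.succ_ne_zero, Or.inr ⟨m.succ_ne_zero, by simpa, by simpa⟩⟩)
        · exact hne ((hb _ _ hwn hwm).trans (ih m))

section Endomorphism

variable {k : Type} [Field k] {w : ℕ → Bool}
  {g₁ : (Option {i : ℕ // w i = false} →₀ k) →ₗ[k] Option {i : ℕ // w i = false} →₀ k}
  {g₂ : (ℕ →₀ k) →ₗ[k] ℕ →₀ k} {g₃ : ({i : ℕ // w i = true} →₀ k) →ₗ[k] {i : ℕ // w i = true} →₀ k}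

theorem coeff_zero_succ (h₁ : g₂ ∘ₗ A₁ k w = A₁ k w ∘ₗ g₁) (h₂ : g₂ ∘ₗ A₂ k w = A₂ k w ∘ₗ g₁)
    (m : ℕ) : g₂ (Finsupp.single 0 1) (m + 1) = 0 := by
  have e₁ := LinearMap.congr_fun h₁ (Finsupp.single none 1)
  have e₂ := LinearMap.congr_fun h₂ (Finsupp.single none 1)
  simp only [LinearMap.comp_apply, A₁_single_none, A₂_single_none, map_zero] at e₁ e₂
  rw [e₂, A₂_apply_succ, ← e₁, Finsupp.coe_zero, Pi.zero_apply]

theorem coeff_eq_zero_of_false_of_true (h₁ : g₂ ∘ₗ A₁ k w = A₁ k w ∘ₗ g₁) {n m : ℕ}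
    (hn : w n = false) (hm : w m = true) : g₂ (Finsupp.single n 1) m = 0 := by
  have e₁ := LinearMap.congr_fun h₁ (Finsupp.single (some ⟨n, hn⟩) 1)
  simp only [LinearMap.comp_apply, A₁_single_some] at e₁
  rw [e₁, A₁_apply_of_true _ hm]

theorem coeff_succ_of_false (h₁ : g₂ ∘ₗ A₁ k w = A₁ k w ∘ₗ g₁) (h₂ : g₂ ∘ₗ A₂ k w = A₂ k w ∘ₗ g₁)
    {n : ℕ} (m : ℕ) (hn : w n = false) :
    g₂ (Finsupp.single (n + 1) 1) (m + 1) = g₂ (Finsupp.single n 1) m := by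
  have e₁ := LinearMap.congr_fun h₁ (Finsupp.single (some ⟨n, hn⟩) 1)
  have e₂ := LinearMap.congr_fun h₂ (Finsupp.single (some ⟨n, hn⟩) 1)
  simp only [LinearMap.comp_apply, A₁_single_some, A₂_single_some] at e₁ e₂
  rw [e₂, A₂_apply_succ, ← e₁]

theorem coeff_succ_of_true (h₃ : g₃ ∘ₗ B₁ k w = B₁ k w ∘ₗ g₂) (h₄ : g₃ ∘ₗ B₂ k w = B₂ k w ∘ₗ g₂)
    {n m : ℕ} (hn : w n = true) (hm : w m = true) :
    g₂ (Finsupp.single (n + 1) 1) (m + 1) = g₂ (Finsupp.single n 1) m := by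
  have e₃ := LinearMap.congr_fun h₃ (Finsupp.single n 1)
  have e₄ := LinearMap.congr_fun h₄ (Finsupp.single (n + 1) 1)
  simp only [LinearMap.comp_apply, B₁_single, B₂_single_succ, dif_pos hn] at e₃ e₄
  have := congrArg (· ⟨m, hm⟩) (e₄.symm.trans e₃)
  simpa only [B₁_apply, B₂_apply] using this

theorem SuffixesOrdered.eq_smul_id (H : SuffixesOrdered w) (h₁ : g₂ ∘ₗ A₁ k w = A₁ k w ∘ₗ g₁)
    (h₂ : g₂ ∘ₗ A₂ k w = A₂ k w ∘ₗ g₁) (h₃ : g₃ ∘ₗ B₁ k w = B₁ k w ∘ₗ g₂)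
    (h₄ : g₃ ∘ₗ B₂ k w = B₂ k w ∘ₗ g₂) :
    g₂ = g₂ (Finsupp.single 0 1) 0 • LinearMap.id := by
  set t := g₂ (Finsupp.single 0 1) 0
  have hzero := H.eq_zero_of_recurrence
    (c := fun n m => g₂ (Finsupp.single n 1) m - Finsupp.single n t m)
    (fun m => by rcases m with _ | m <;> simp [t, coeff_zero_succ h₁ h₂])
    (fun n m hn hm => by
      simp [coeff_eq_zero_of_false_of_true h₁ hn hm, Finsupp.single_apply]
      rintro rfl; simp_all)
    (fun n m hn => by simp [coeff_succ_of_false h₁ h₂ m hn, Finsupp.single_apply])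
    (fun n m hn hm => by simp [coeff_succ_of_true h₃ h₄ hn hm, Finsupp.single_apply])
  refine Finsupp.lhom_ext fun n c => Finsupp.ext fun m => ?_
  rw [← Finsupp.smul_single_one, map_smul, Finsupp.smul_apply, sub_eq_zero.1 (hzero n m)]
  by_cases h : n = m <;> simp [h, mul_comm]

end Endomorphism

theorem SuffixesOrdered.isBrick {k : Type} [Field k] {w : ℕ → Bool} (H : SuffixesOrdered w) :
    IsBrick (stringModuleAlpha2 k w) :=
  DKRep.isBrick_of_forall_f2_eq_smul (eq_zero_of_A₁_eq_zero_of_A₂_eq_zero (w := w)) B₁_surjective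
    fun f => ⟨_, H.eq_smul_id (g₂ := f.f2) f.comm_a1 f.comm_a2 f.comm_b1 f.comm_b2⟩

def Agrees (w : ℕ → Bool) (p q n : ℕ) : Prop := p ≤ n ∧ ∀ i < n - p, w (p + i) = w (q + i)

section Agrees

variable {w : ℕ → Bool} {p q n : ℕ}

theorem agrees_self : Agrees w p q p := ⟨le_rfl, by simp⟩

theorem agrees_succ_iff (hpn : p ≤ n) :
    Agrees w p q (n + 1) ↔ Agrees w p q n ∧ w (q + (n - p)) = w n := by
  unfold Agrees
  refine ⟨fun ⟨_, h⟩ => ⟨⟨hpn, fun i hi => h i (by omega)⟩, ?_⟩,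
    fun ⟨⟨_, h⟩, hn⟩ => ⟨by omega, fun i hi => ?_⟩⟩
  · simpa [Nat.add_sub_cancel' hpn] using (h (n - p) (by omega)).symm
  · rcases (by omega : i < n - p ∨ i = n - p) with hi | rfl
    · exact h i hi
    · rw [Nat.add_sub_cancel' hpn, hn]

theorem Agrees.eq_false (hnlt : ¬ suffix w p < suffix w q) (h : Agrees w p q n)
    (hn : w n = false) : w (q + (n - p)) = false := by
  by_contra hq
  exact hnlt (suffix_lt_iff.2 ⟨n - p, h.2, by rwa [Nat.add_sub_cancel' h.1], by simpa using hq⟩)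

end Agrees

section GraphMap

variable (k : Type) [Field k] (w : ℕ → Bool) (p q : ℕ)

open Classical in
noncomputable def graphMap₁ :
    (Option {i : ℕ // w i = false} →₀ k) →ₗ[k] Option {i : ℕ // w i = false} →₀ k :=
  Finsupp.lsum k fun o => match o with
    | none => 0
    | some i =>
      (if h : Agrees w p q i ∧ w (q + (i - p)) = false then Finsupp.lsingle (some ⟨_, h.2⟩)
        else 0) + if q = 0 ∧ (i : ℕ) + 1 = p then Finsupp.lsingle none else 0

open Classical in
noncomputable def graphMap₂ : (ℕ →₀ k) →ₗ[k] ℕ →₀ k :=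
  Finsupp.lsum k fun n => if Agrees w p q n then Finsupp.lsingle (q + (n - p)) else 0

open Classical in
noncomputable def graphMap₃ :
    ({i : ℕ // w i = true} →₀ k) →ₗ[k] {i : ℕ // w i = true} →₀ k :=
  Finsupp.lsum k fun z =>
    if h : Agrees w p q z ∧ w (q + (z - p)) = true then Finsupp.lsingle ⟨_, h.2⟩ else 0

variable {k w p q}

open Classical in
theorem graphMap₁_single_some {n : ℕ} (hn : w n = false) (c : k) :
    graphMap₁ k w p q (Finsupp.single (some ⟨n, hn⟩) c) =
      (if h : Agrees w p q n ∧ w (q + (n - p)) = false then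
        Finsupp.single (some ⟨_, h.2⟩) c else 0) +
      if q = 0 ∧ n + 1 = p then Finsupp.single none c else 0 := by
  simp only [graphMap₁, Finsupp.lsum_single, LinearMap.add_apply]
  congr 1 <;> split_ifs <;> simp

open Classical in
theorem graphMap₂_single (n : ℕ) (c : k) :
    graphMap₂ k w p q (Finsupp.single n c) =
      if Agrees w p q n then Finsupp.single (q + (n - p)) c else 0 := by
  simp only [graphMap₂, Finsupp.lsum_single]
  split_ifs <;> simp

open Classical in
theorem graphMap₃_single {n : ℕ} (hn : w n = true) (c : k) :
    graphMap₃ k w p q (Finsupp.single ⟨n, hn⟩ c) =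
      if h : Agrees w p q n ∧ w (q + (n - p)) = true then Finsupp.single ⟨_, h.2⟩ c else 0 := by
  simp only [graphMap₃, Finsupp.lsum_single]
  split_ifs <;> simp

theorem graphMap_comm_a1 (hnlt : ¬ suffix w p < suffix w q) :
    graphMap₂ k w p q ∘ₗ A₁ k w = A₁ k w ∘ₗ graphMap₁ k w p q := by
  refine Finsupp.lhom_ext fun o c => ?_
  rcases o with _ | ⟨n, hn⟩
  · simp [graphMap₁]
  rw [LinearMap.comp_apply, LinearMap.comp_apply, A₁_single_some, graphMap₂_single,
    graphMap₁_single_some, map_add]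
  by_cases h : Agrees w p q n
  · rw [if_pos h, dif_pos ⟨h, h.eq_false hnlt hn⟩, A₁_single_some]
    split_ifs <;> simp
  · rw [if_neg h, dif_neg (fun h' => h h'.1)]
    split_ifs <;> simp

theorem graphMap_comm_a2 (hp : p ≠ 0) (hpq : q ≠ 0 → w (p - 1) = true)
    (hnlt : ¬ suffix w p < suffix w q) :
    graphMap₂ k w p q ∘ₗ A₂ k w = A₂ k w ∘ₗ graphMap₁ k w p q := by
  have h0 : ¬ Agrees w p q 0 := fun h => hp (Nat.le_zero.1 h.1)
  refine Finsupp.lhom_ext fun o c => ?_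
  rcases o with _ | ⟨n, hn⟩
  · simp [graphMap₁, graphMap₂_single, h0]
  rw [LinearMap.comp_apply, LinearMap.comp_apply, A₂_single_some, graphMap₂_single,
    graphMap₁_single_some, map_add]
  dsimp only
  rcases lt_trichotomy (n + 1) p with hlt | rfl | hgt
  · have h1 : ¬ Agrees w p q (n + 1) := fun h => by have := h.1; omega
    have h2 : ¬ Agrees w p q n := fun h => by have := h.1; omega
    simp [h1, h2, hlt.ne]
  · have h2 : ¬ Agrees w (n + 1) q n := fun h => by have := h.1; omega
    rcases eq_or_ne q 0 with rfl | hq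
    · simp [agrees_self, h2]
    · simpa [hn] using hpq hq
  · rw [agrees_succ_iff (by omega), hn, show q + (n + 1 - p) = q + (n - p) + 1 by omega]
    simp only [hgt.ne', and_false, if_false, map_zero, add_zero]
    split_ifs with h <;> simp

theorem graphMap_comm_b1 (hnlt : ¬ suffix w p < suffix w q) :
    graphMap₃ k w p q ∘ₗ B₁ k w = B₁ k w ∘ₗ graphMap₂ k w p q := by
  refine Finsupp.lhom_ext fun n c => ?_
  rw [LinearMap.comp_apply, LinearMap.comp_apply, B₁_single, graphMap₂_single]
  by_cases h : Agrees w p q n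
  · rw [if_pos h, B₁_single]
    by_cases hn : w n = true
    · rw [dif_pos hn, graphMap₃_single hn]
      simp [h]
    · rw [dif_neg hn, map_zero, dif_neg (by simp [h.eq_false hnlt (by simpa using hn)])]
  · rw [if_neg h, map_zero]
    split_ifs with hn
    · simp [graphMap₃_single hn, h]
    · rfl

theorem graphMap_comm_b2 (hp : p ≠ 0) (hpq : q ≠ 0 → w (q - 1) = false)
    (hnlt : ¬ suffix w p < suffix w q) :
    graphMap₃ k w p q ∘ₗ B₂ k w = B₂ k w ∘ₗ graphMap₂ k w p q := by
  have h0 : ¬ Agrees w p q 0 := fun h => hp (Nat.le_zero.1 h.1)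
  refine Finsupp.lhom_ext fun n c => ?_
  rcases n with _ | n
  · simp [graphMap₂_single, h0]
  rw [LinearMap.comp_apply, LinearMap.comp_apply, B₂_single_succ, graphMap₂_single]
  have hleft : ¬ Agrees w p q n →
      graphMap₃ k w p q (if h : w n = true then Finsupp.single ⟨n, h⟩ c else 0) = 0 := by
    intro h
    split_ifs with hn
    · rw [graphMap₃_single hn, dif_neg fun h' => h h'.1]
    · exact map_zero _
  rcases lt_trichotomy (n + 1) p with hlt | rfl | hgt
  · rw [hleft fun h => by have := h.1; omega, if_neg fun h => by have := h.1; omega, map_zero]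
  · rw [hleft fun h => by have := h.1; omega, if_pos agrees_self, Nat.sub_self, add_zero]
    rcases q with _ | q
    · rw [B₂_single_zero]
    · rw [B₂_single_succ, dif_neg (by simpa using hpq q.succ_ne_zero)]
  · rw [agrees_succ_iff (by omega), show q + (n + 1 - p) = q + (n - p) + 1 by omega]
    by_cases hn : w n = true
    · rw [dif_pos hn, graphMap₃_single hn, hn]
      by_cases h : Agrees w p q n ∧ w (q + (n - p)) = true
      · rw [dif_pos h, if_pos h, B₂_single_succ, dif_pos h.2]
      · rw [dif_neg h, if_neg h, map_zero]
    · rw [dif_neg hn, map_zero]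
      split_ifs with h
      · rw [B₂_single_succ, dif_neg (h.2.symm ▸ hn)]
      · rw [map_zero]

end GraphMap

theorem not_isBrick_of_not_suffix_lt {k : Type} [Field k] {w : ℕ → Bool} {p q : ℕ}
    (hpq : AdmissiblePair w p q) (hnlt : ¬ suffix w p < suffix w q) :
    ¬ IsBrick (stringModuleAlpha2 k w) := by
  obtain ⟨hp, hq⟩ := hpq
  let f : DKHom (stringModuleAlpha2 k w) (stringModuleAlpha2 k w) :=
    ⟨graphMap₁ k w p q, graphMap₂ k w p q, graphMap₃ k w p q, graphMap_comm_a1 hnlt,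
      graphMap_comm_a2 hp (fun h => (hq.resolve_left h).2.1) hnlt, graphMap_comm_b1 hnlt,
      graphMap_comm_b2 hp (fun h => (hq.resolve_left h).2.2) hnlt⟩
  have hfp : graphMap₂ k w p q (Finsupp.single p 1) = Finsupp.single q 1 := by
    simp [graphMap₂_single, agrees_self]
  have hf0 : graphMap₂ k w p q (Finsupp.single 0 1) = 0 := by
    simp [graphMap₂_single, Agrees, hp]
  have hf2 : f.f2 ≠ 0 := fun h => by
    have := LinearMap.congr_fun h (Finsupp.single p (1 : k))
    change graphMap₂ k w p q (Finsupp.single p 1) = 0 at this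
    exact Finsupp.single_ne_zero.2 one_ne_zero (hfp ▸ this)
  intro hB
  have hinj : Function.Injective (graphMap₂ k w p q) := (hB f (Or.inr (Or.inl hf2))).2.1.1
  exact Finsupp.single_ne_zero.2 one_ne_zero (hinj (hf0.trans (map_zero _).symm))

theorem isBrick_iff_suffixesOrdered {k : Type} [Field k] {w : ℕ → Bool} :
    IsBrick (stringModuleAlpha2 k w) ↔ SuffixesOrdered w :=
  ⟨fun hB _ _ hpq => by_contra fun hnlt => not_isBrick_of_not_suffix_lt hpq hnlt hB,
    SuffixesOrdered.isBrick⟩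

theorem brick_alpha2w_iff (k : Type) [Field k] (w : ℕ → Bool) :
    IsBrick (stringModuleAlpha2 k w) ↔
      (w 0 = true ∧ ∃ α : ℝ, Irrational α ∧ 0 < α ∧ α < 1 ∧
        (fun n => w (n + 1)) = charWord α) :=
  isBrick_iff_suffixesOrdered.trans suffixesOrdered_iff_charWord

end StringBricks
end

section
/- Let w : ℕ → {a,b} be an aperiodic right-infinite binary word. Then the three words w, a·w and b·w are all balanced if and only if there exists an irrational α ∈ (0,1) such that w equals the characteristic word c_α of slope α. (This is the combinatorial content of the paper's lemma that a right-infinite aperiodic string in Str(a,b) is a strong inner brick if and only if it is a characteristic Sturmian word.) -/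
/-!
Let `B n` be the number of `b`s in the length-`n` prefix of `a·w`. Comparing the windows of `a·w`
and of `b·w` with their own prefixes forces `B (m + n) - B m - B n ∈ {0, 1}`, so `B` has a slope
`β` with `n β - 1 ≤ B n ≤ n β`. If `β` is irrational this means `B n = ⌊n β⌋`, i.e. `w = c_β`;
if `β = p / q`, the integers `q B n - p n` are bounded and move monotonically under `n ↦ n + q`,
so they are eventually `q`-periodic and so is `w`. Conversely `c_α`, `a·c_α` and `b·c_α` are the
increments of `⌊(n + 1) α⌋`, `⌊n α⌋` and `⌈n α⌉`, and every window of length `m` of such a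
sequence has weight `⌊m α⌋` or `⌊m α⌋ + 1`.
-/

namespace StringBricks

def IsFactor (w : ℕ → Bool) (u : List Bool) : Prop :=
  ∃ i : ℕ, ∀ j : Fin u.length, w (i + j) = u.get j

def BalancedWord (w : ℕ → Bool) : Prop :=
  ∀ u v : List Bool, IsFactor w u → IsFactor w v → u.length = v.length →
    |(u.count true : ℤ) - (v.count true : ℤ)| ≤ 1

def EventuallyPeriodic (w : ℕ → Bool) : Prop :=
  ∃ N p : ℕ, 1 ≤ p ∧ ∀ n : ℕ, N ≤ n → w (n + p) = w n

/-- The word `ℓ·w` obtained by prepending the letter `ℓ` to `w`. -/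
def consWord (ℓ : Bool) (w : ℕ → Bool) : ℕ → Bool :=
  fun n => match n with
  | 0 => ℓ
  | n + 1 => w n

def prefixWeight (v : ℕ → Bool) (n : ℕ) : ℤ :=
  ∑ j ∈ Finset.range n, if v j then 1 else 0

@[simp]
lemma prefixWeight_zero (v : ℕ → Bool) : prefixWeight v 0 = 0 := rfl

lemma prefixWeight_succ (v : ℕ → Bool) (n : ℕ) :
    prefixWeight v (n + 1) = prefixWeight v n + if v n then 1 else 0 :=
  Finset.sum_range_succ _ n

def window (v : ℕ → Bool) (i m : ℕ) : List Bool :=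
  List.ofFn fun j : Fin m => v (i + j)

section Balance

variable {v : ℕ → Bool}

lemma count_true_ofFn {m : ℕ} (f : Fin m → Bool) :
    ((List.ofFn f).count true : ℤ) = ∑ j, if f j then 1 else 0 := by
  induction m with
  | zero => simp
  | succ m ih =>
    rw [List.ofFn_succ, List.count_cons, Fin.sum_univ_succ, ← ih]
    cases f 0 <;> simp [add_comm]

lemma count_true_window (v : ℕ → Bool) (i m : ℕ) :
    ((window v i m).count true : ℤ) = prefixWeight v (i + m) - prefixWeight v i := by
  rw [window, count_true_ofFn, Fin.sum_univ_eq_sum_range (fun j => if v (i + j) then 1 else 0),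
    prefixWeight, prefixWeight, Finset.sum_range_add, add_sub_cancel_left]

@[simp]
lemma length_window (v : ℕ → Bool) (i m : ℕ) : (window v i m).length = m :=
  List.length_ofFn

lemma isFactor_window (v : ℕ → Bool) (i m : ℕ) : IsFactor v (window v i m) :=
  ⟨i, fun j => (List.get_ofFn (fun k : Fin m => v (i + k)) j).symm⟩

lemma IsFactor.exists_window_eq {u : List Bool} (hu : IsFactor v u) :
    ∃ i, window v i u.length = u := by
  obtain ⟨i, h⟩ := hu
  exact ⟨i, List.ext_get (by simp) fun n h₁ _ => by simp [window, h ⟨n, by simpa using h₁⟩]⟩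

theorem balancedWord_iff :
    BalancedWord v ↔ ∀ i j m : ℕ,
      |(prefixWeight v (i + m) - prefixWeight v i) -
        (prefixWeight v (j + m) - prefixWeight v j)| ≤ 1 := by
  constructor
  · intro hv i j m
    have h := hv _ _ (isFactor_window v i m) (isFactor_window v j m) (by simp)
    rwa [count_true_window, count_true_window] at h
  · intro hv u u' hu hu' hlen
    obtain ⟨i, hi⟩ := hu.exists_window_eq
    obtain ⟨j, hj⟩ := hu'.exists_window_eq
    rw [← hi, ← hj, count_true_window, count_true_window, hlen]
    exact hv i j _

lemma prefixWeight_eq_sub_of_indicator {F : ℕ → ℤ}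
    (hF : ∀ n, (if v n then 1 else 0) = F (n + 1) - F n) (n : ℕ) :
    prefixWeight v n = F n - F 0 := by
  rw [prefixWeight, Finset.sum_congr rfl fun j _ => hF j, Finset.sum_range_sub]

theorem balancedWord_of_indicator_eq_sub {F : ℕ → ℤ}
    (hF : ∀ n, (if v n then 1 else 0) = F (n + 1) - F n)
    (hwin : ∀ i j m : ℕ, |(F (i + m) - F i) - (F (j + m) - F j)| ≤ 1) :
    BalancedWord v := by
  refine balancedWord_iff.mpr fun i j m => ?_
  simp only [prefixWeight_eq_sub_of_indicator hF]
  convert hwin i j m using 2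
  ring

end Balance

lemma floor_window_bounds (α ρ : ℝ) (i m : ℕ) :
    ⌊(m : ℝ) * α⌋ ≤ ⌊((i + m : ℕ) : ℝ) * α + ρ⌋ - ⌊(i : ℝ) * α + ρ⌋ ∧
      ⌊((i + m : ℕ) : ℝ) * α + ρ⌋ - ⌊(i : ℝ) * α + ρ⌋ ≤ ⌊(m : ℝ) * α⌋ + 1 := by
  have hsplit : ((i + m : ℕ) : ℝ) * α + ρ = ((i : ℝ) * α + ρ) + (m : ℝ) * α := by push_cast; ring
  rw [hsplit]
  have := Int.le_floor_add ((i : ℝ) * α + ρ) ((m : ℝ) * α)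
  have := Int.le_floor_add_floor ((i : ℝ) * α + ρ) ((m : ℝ) * α)
  constructor <;> linarith

lemma abs_floor_window_sub_le (α ρ : ℝ) (i j m : ℕ) :
    |(⌊((i + m : ℕ) : ℝ) * α + ρ⌋ - ⌊(i : ℝ) * α + ρ⌋) -
      (⌊((j + m : ℕ) : ℝ) * α + ρ⌋ - ⌊(j : ℝ) * α + ρ⌋)| ≤ 1 := by
  have hi := floor_window_bounds α ρ i m
  have hj := floor_window_bounds α ρ j m
  rw [abs_le]; constructor <;> linarith

section CharacteristicWord

variable {α : ℝ}

lemma indicator_charWord (h0 : 0 ≤ α) (h1 : α ≤ 1) (n : ℕ) :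
    (if charWord α n then 1 else 0) = ⌊((n : ℝ) + 2) * α⌋ - ⌊((n : ℝ) + 1) * α⌋ := by
  have hmono : ⌊((n : ℝ) + 1) * α⌋ ≤ ⌊((n : ℝ) + 2) * α⌋ := Int.floor_le_floor (by nlinarith)
  have hstep : ⌊((n : ℝ) + 2) * α⌋ ≤ ⌊((n : ℝ) + 1) * α⌋ + 1 := by
    rw [← Int.floor_add_one]; exact Int.floor_le_floor (by nlinarith)
  unfold charWord
  rcases (by omega : ⌊((n : ℝ) + 2) * α⌋ - ⌊((n : ℝ) + 1) * α⌋ = 0 ∨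
    ⌊((n : ℝ) + 2) * α⌋ - ⌊((n : ℝ) + 1) * α⌋ = 1) with h | h <;> simp [h]

lemma eq_charWord_of_indicator {v : ℕ → Bool}
    (hv : ∀ n, (if v n then 1 else 0) = ⌊((n : ℝ) + 2) * α⌋ - ⌊((n : ℝ) + 1) * α⌋) :
    v = charWord α := by
  funext n
  unfold charWord
  rw [← hv n]
  cases v n <;> simp

theorem balancedWord_charWord (h0 : 0 ≤ α) (h1 : α ≤ 1) : BalancedWord (charWord α) := by
  refine balancedWord_of_indicator_eq_sub (F := fun n => ⌊(n : ℝ) * α + α⌋) (fun n => ?_)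
    (abs_floor_window_sub_le α α)
  rw [indicator_charWord h0 h1]
  push_cast
  ring_nf

theorem balancedWord_consWord_false_charWord (h0 : 0 ≤ α) (h1 : α < 1) :
    BalancedWord (consWord false (charWord α)) := by
  refine balancedWord_of_indicator_eq_sub (F := fun n => ⌊(n : ℝ) * α + 0⌋) (fun n => ?_)
    (abs_floor_window_sub_le α 0)
  cases n with
  | zero => simp [consWord, Int.floor_eq_zero_iff.mpr ⟨h0, h1⟩]
  | succ n =>
    rw [consWord, indicator_charWord h0 h1.le]
    push_cast
    ring_nf

lemma ceil_eq_floor_add_one_of_irrational {x : ℝ} (hx : Irrational x) : ⌈x⌉ = ⌊x⌋ + 1 :=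
  (Int.ceil_eq_floor_add_one_iff_notMem x).mpr fun ⟨m, hm⟩ => hx.ne_int m hm.symm

lemma floor_eq_of_le_of_le_add_one {x : ℝ} (hx : Irrational x) {z : ℤ} (h₁ : z ≤ x)
    (h₂ : x ≤ z + 1) : ⌊x⌋ = z :=
  Int.floor_eq_iff.mpr ⟨h₁, h₂.lt_of_ne fun h => hx.ne_int (z + 1) (by rw [h]; push_cast; ring)⟩

/-- Here the potential is `⌈n α⌉ = -⌊n (-α)⌋`, which has the same increments as `⌊(n + 1) α⌋`
away from `n = 0` because `n α` is never an integer. -/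
theorem balancedWord_consWord_true_charWord (hα : Irrational α) (h0 : 0 < α) (h1 : α ≤ 1) :
    BalancedWord (consWord true (charWord α)) := by
  refine balancedWord_of_indicator_eq_sub (F := fun n => -⌊(n : ℝ) * (-α) + 0⌋) (fun n => ?_)
    (fun i j m => by rw [← abs_neg]; convert abs_floor_window_sub_le (-α) 0 i j m using 2; ring)
  simp only [add_zero, mul_neg, Int.floor_neg, neg_neg]
  cases n with
  | zero =>
    have hceil : ⌈α⌉ = 1 := Int.ceil_eq_iff.mpr ⟨by norm_num [h0], by norm_num [h1]⟩
    simp [consWord, hceil]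
  | succ n =>
    have hceil (k : ℕ) : ⌈((k + 1 : ℕ) : ℝ) * α⌉ = ⌊((k + 1 : ℕ) : ℝ) * α⌋ + 1 :=
      ceil_eq_floor_add_one_of_irrational (hα.natCast_mul k.succ_ne_zero)
    rw [consWord, hceil, hceil, indicator_charWord h0.le h1]
    push_cast
    ring_nf

end CharacteristicWord

/-- The sliding sum `∑_{k < q} f (n + k)` is monotone and bounded, hence eventually constant. -/
lemma exists_add_eq_of_le_add {f : ℕ → ℤ} {q : ℕ} {C : ℤ} (hf : ∀ n, f n ≤ f (n + q))
    (hC : ∀ n, f n ≤ C) : ∃ N, ∀ n, N ≤ n → f (n + q) = f n := by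
  set g : ℕ → ℤ := fun n => ∑ k ∈ Finset.range q, f (n + k)
  have hg (n : ℕ) : g (n + 1) + f n = g n + f (n + q) := by
    have h := Finset.sum_range_succ' (fun k => f (n + k)) q
    rw [Finset.sum_range_succ] at h
    simp only [add_zero, ← add_assoc] at h
    have hshift : g (n + 1) = ∑ k ∈ Finset.range q, f (n + k + 1) :=
      Finset.sum_congr rfl fun k _ => by rw [add_right_comm]
    linarith
  have hmono : Monotone g := monotone_nat_of_le_succ fun n => by linarith [hg n, hf n]
  have hbdd (n : ℕ) : g n ≤ q * C := by
    simpa using Finset.sum_le_sum fun k (_ : k ∈ Finset.range q) => hC (n + k)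
  obtain ⟨_, ⟨N, rfl⟩, hmax⟩ :=
    Int.exists_greatest_of_bdd (P := fun z => ∃ n, g n = z) ⟨_, fun _ ⟨n, hn⟩ => hn ▸ hbdd n⟩
      ⟨g 0, 0, rfl⟩
  refine ⟨N, fun n hn => le_antisymm ?_ (hf n)⟩
  linarith [hg n, hmax _ ⟨n + 1, rfl⟩, hmono hn]

lemma mul_sub_mul_bounds_of_slope {B : ℕ → ℤ} {β : ℝ}
    (hβ : ∀ n : ℕ, (B n : ℝ) ≤ n * β ∧ n * β ≤ B n + 1) {q : ℕ} {p : ℤ} (hqβ : (q : ℝ) * β = p)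
    (n : ℕ) : -(q : ℤ) ≤ q * B n - p * n ∧ q * B n - p * n ≤ 0 := by
  have hq : (0 : ℝ) ≤ q := by positivity
  have h₁ := mul_le_mul_of_nonneg_left (hβ n).1 hq
  have h₂ := mul_le_mul_of_nonneg_left (hβ n).2 hq
  rw [mul_left_comm, hqβ] at h₁ h₂
  have h₁' : q * B n ≤ p * n := (Int.cast_le (R := ℝ)).mp (by push_cast; linarith)
  have h₂' : p * n ≤ q * B n + q := (Int.cast_le (R := ℝ)).mp (by push_cast; linarith)
  constructor <;> linarith

def QuasiAdditive (B : ℕ → ℤ) : Prop :=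
  ∀ m n, B m + B n ≤ B (m + n) ∧ B (m + n) ≤ B m + B n + 1

namespace QuasiAdditive

variable {B : ℕ → ℤ}

/-- `β = sup B n / n` works, because `k B n ≤ B (k n)` and `B (k n) + 1 ≤ k (B n + 1)` put every
`B n / n` below every `(B k + 1) / k`. -/
theorem exists_slope (hB : QuasiAdditive B) :
    ∃ β : ℝ, ∀ n : ℕ, (B n : ℝ) ≤ n * β ∧ n * β ≤ B n + 1 := by
  have hmul (k n : ℕ) :
      (k + 1) * B n ≤ B ((k + 1) * n) ∧ B ((k + 1) * n) + 1 ≤ (k + 1) * (B n + 1) := by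
    induction k with
    | zero => simp
    | succ k ih =>
      rw [show (k + 1 + 1) * n = (k + 1) * n + n by ring]
      have := hB ((k + 1) * n) n
      push_cast
      constructor <;> linarith
  have hcross (m n : ℕ) : ((B (m + 1) : ℝ)) / (m + 1) ≤ (B (n + 1) + 1) / (n + 1) := by
    have h1 := (hmul n (m + 1)).1
    have h2 := (hmul m (n + 1)).2
    rw [mul_comm (m + 1)] at h2
    rw [div_le_div_iff₀ (by positivity) (by positivity)]
    exact_mod_cast (by linarith :
      B (m + 1) * ((n : ℤ) + 1) ≤ (B (n + 1) + 1) * ((m : ℤ) + 1))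
  set β := ⨆ n : ℕ, (B (n + 1) : ℝ) / (n + 1)
  have hbdd : BddAbove (Set.range fun n : ℕ => (B (n + 1) : ℝ) / (n + 1)) :=
    ⟨_, Set.forall_mem_range.mpr fun m => hcross m 0⟩
  refine ⟨β, fun n => ?_⟩
  cases n with
  | zero =>
    have := hB 0 0
    simp only [add_zero] at this
    simp only [CharP.cast_eq_zero, zero_mul]
    constructor <;> exact_mod_cast (by omega)
  | succ n =>
    have hlow := le_ciSup hbdd n
    have hup : β ≤ (B (n + 1) + 1) / (n + 1) := ciSup_le fun m => hcross m n
    rw [div_le_iff₀ (by positivity)] at hlow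
    rw [le_div_iff₀ (by positivity)] at hup
    push_cast
    constructor <;> linarith

/-- At a rational slope `p / q`, the defects `q B n - p n` lie in `[-q, 0]` and all move in the
same direction under `n ↦ n + q`, so they eventually stop moving. -/
theorem exists_add_eq_of_not_irrational (hB : QuasiAdditive B) {β : ℝ}
    (hβ : ∀ n : ℕ, (B n : ℝ) ≤ n * β ∧ n * β ≤ B n + 1) (hrat : ¬ Irrational β) :
    ∃ q : ℕ, 0 < q ∧ ∃ p : ℤ, ∃ N, ∀ n, N ≤ n → B (n + q) = B n + p := by
  obtain ⟨r, rfl⟩ : β ∈ Set.range ((↑) : ℚ → ℝ) := not_not.mp hrat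
  refine ⟨r.den, r.pos, r.num, ?_⟩
  set q := r.den
  set p := r.num
  have hqβ : (q : ℝ) * r = p := by exact_mod_cast (mul_comm _ _).trans r.mul_den_eq_num
  set D : ℕ → ℤ := fun n => q * B n - p * n
  have hD := mul_sub_mul_bounds_of_slope hβ hqβ
  have hDq (n : ℕ) : D (n + q) - D n = q * (B (n + q) - B n - p) := by
    simp only [D]; push_cast; ring
  have hBq : B q = p ∨ B q = p - 1 := by
    have h := hβ q
    rw [hqβ] at h
    have : B q ≤ p := by exact_mod_cast h.1
    have : p ≤ B q + 1 := by exact_mod_cast h.2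
    omega
  have hstable : ∃ N, ∀ n, N ≤ n → D (n + q) = D n := by
    rcases hBq with hBq | hBq
    · refine exists_add_eq_of_le_add (C := 0) (fun n => ?_) fun n => (hD n).2
      have := (hB n q).1
      nlinarith [hDq n]
    · have hanti (n : ℕ) : -D n ≤ -D (n + q) := by
        have := (hB n q).2
        nlinarith [hDq n]
      obtain ⟨N, hN⟩ := exists_add_eq_of_le_add hanti (C := q) fun n => by linarith [(hD n).1]
      exact ⟨N, fun n hn => neg_inj.mp (hN n hn)⟩
  obtain ⟨N, hN⟩ := hstable
  refine ⟨N, fun n hn => ?_⟩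
  have h := hDq n
  rw [hN n hn, sub_self, eq_comm, mul_eq_zero] at h
  have : (q : ℤ) ≠ 0 := by exact_mod_cast r.den_nz
  have := h.resolve_left this
  omega

end QuasiAdditive

section ConsWord

variable {w : ℕ → Bool}

lemma prefixWeight_consWord_succ (ℓ : Bool) (w : ℕ → Bool) (n : ℕ) :
    prefixWeight (consWord ℓ w) (n + 1) = prefixWeight w n + if ℓ then 1 else 0 :=
  Finset.sum_range_succ' _ n

lemma abs_prefixWeight_add_sub_le_of_balancedWord_consWord {ℓ : Bool}
    (hb : BalancedWord (consWord ℓ w)) (m n : ℕ) :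
    |prefixWeight w (m + n + 1) - prefixWeight w m - prefixWeight w n - if ℓ then 1 else 0| ≤ 1 := by
  have h := balancedWord_iff.mp hb (m + 1) 0 (n + 1)
  rw [show m + 1 + (n + 1) = m + n + 1 + 1 by ring, zero_add, prefixWeight_zero,
    prefixWeight_consWord_succ, prefixWeight_consWord_succ, prefixWeight_consWord_succ] at h
  convert h using 2
  ring

lemma quasiAdditive_prefixWeight_consWord_false (hb0 : BalancedWord (consWord false w))
    (hb1 : BalancedWord (consWord true w)) :
    QuasiAdditive (prefixWeight (consWord false w)) := by
  intro m n
  cases m with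
  | zero => simp
  | succ m =>
    cases n with
    | zero => simp
    | succ n =>
      have h0 := abs_prefixWeight_add_sub_le_of_balancedWord_consWord hb0 m n
      have h1 := abs_prefixWeight_add_sub_le_of_balancedWord_consWord hb1 m n
      rw [show m + 1 + (n + 1) = m + n + 1 + 1 by ring]
      simp only [prefixWeight_consWord_succ, Bool.false_eq_true, if_false, if_true,
        add_zero] at h0 h1 ⊢
      rw [abs_le] at h0 h1
      omega

end ConsWord

lemma eventuallyPeriodic_of_indicator_eq_sub {w : ℕ → Bool} {F : ℕ → ℤ}
    (hF : ∀ n, (if w n then 1 else 0) = F (n + 1) - F n) {q : ℕ} (hq : 0 < q) {p : ℤ} {N : ℕ}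
    (hper : ∀ n, N ≤ n → F (n + q) = F n + p) : EventuallyPeriodic w := by
  refine ⟨N, q, hq, fun n hn => ?_⟩
  have h := hF (n + q)
  rw [add_right_comm, hper n hn, hper (n + 1) (by omega), add_sub_add_right_eq_sub, ← hF n] at h
  revert h
  cases w (n + q) <;> cases w n <;> simp

theorem exists_charWord_of_balancedWord_consWord {w : ℕ → Bool} (hap : ¬ EventuallyPeriodic w)
    (hb0 : BalancedWord (consWord false w)) (hb1 : BalancedWord (consWord true w)) :
    ∃ α : ℝ, Irrational α ∧ 0 < α ∧ α < 1 ∧ w = charWord α := by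
  obtain ⟨B, hB, hB1, hletter⟩ : ∃ B : ℕ → ℤ, QuasiAdditive B ∧ B 1 = 0 ∧
      ∀ n, (if w n then 1 else 0) = B (n + 1 + 1) - B (n + 1) :=
    ⟨_, quasiAdditive_prefixWeight_consWord_false hb0 hb1, rfl, fun n => by
      rw [prefixWeight_consWord_succ, prefixWeight_consWord_succ, prefixWeight_succ]
      ring⟩
  obtain ⟨β, hβ⟩ := hB.exists_slope
  by_cases hirr : Irrational β
  · have hfloor (n : ℕ) : B (n + 1) = ⌊((n : ℝ) + 1) * β⌋ := by
      have h := hβ (n + 1)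
      push_cast at h
      exact (floor_eq_of_le_of_le_add_one
        (by simpa using hirr.natCast_mul (m := n + 1) (by omega)) h.1 h.2).symm
    have hβ1 := hβ 1
    simp only [hB1, Nat.cast_one, one_mul, Int.cast_zero, zero_add] at hβ1
    refine ⟨β, hirr, ?_, ?_, eq_charWord_of_indicator fun n => ?_⟩
    · exact hβ1.1.lt_of_ne (fun h => hirr.ne_int 0 (by simp [← h]))
    · exact hβ1.2.lt_of_ne (fun h => hirr.ne_int 1 (by simp [h]))
    · rw [hletter, hfloor, hfloor]
      push_cast
      ring_nf
  · obtain ⟨q, hq, p, N, hper⟩ := hB.exists_add_eq_of_not_irrational hβ hirr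
    have hper' (n : ℕ) (hn : N ≤ n) : B (n + q + 1) = B (n + 1) + p := by
      rw [add_right_comm]; exact hper (n + 1) (by omega)
    exact absurd (eventuallyPeriodic_of_indicator_eq_sub (F := fun n => B (n + 1)) hletter hq hper')
      hap

theorem balanced_with_cons_iff_characteristic (w : ℕ → Bool)
    (hap : ¬ EventuallyPeriodic w) :
    (BalancedWord w ∧ BalancedWord (consWord false w) ∧ BalancedWord (consWord true w)) ↔
      ∃ α : ℝ, Irrational α ∧ 0 < α ∧ α < 1 ∧ w = charWord α := by
  constructor
  · rintro ⟨-, hb0, hb1⟩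
    exact exists_charWord_of_balancedWord_consWord hap hb0 hb1
  · rintro ⟨α, hα, h0, h1, rfl⟩
    exact ⟨balancedWord_charWord h0.le h1.le, balancedWord_consWord_false_charWord h0.le h1,
      balancedWord_consWord_true_charWord hα h0 h1.le⟩

end StringBricks
end

section
/- Let w : ℕ → {a,b} be an aperiodic right-infinite binary word. Then w is balanced (hence Sturmian) if and only if there is no finite word x over {a,b} such that both a·x·a and b·x·b are factors of w. -/
/-!
STATEMENT 4: An aperiodic right-infinite binary word `w` (alphabet `Bool`,
`a = false`, `b = true`) is balanced (hence Sturmian) if and only if there is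
no finite word `x` such that both `a·x·a` and `b·x·b` are factors of `w`.
-/

namespace StringBricks

/-
If `u` has at least two more `b`s than `v` of the same length, scan both words from the left.
A first mismatch `a`/`b` only widens the gap of the remaining suffixes. After a first mismatch
`b`/`a`, either the next mismatch is again `b`/`a`, and the common word `x` in between gives
`b·x·b` in `u` and `a·x·a` in `v`, or it is `a`/`b`, and the two prefixes have equal weight, so
the suffixes are a shorter pair with the same gap. Conversely, `b·x·b` and `a·x·a` differ in
weight by two.
-/

def HasBorderedPair (u v : List Bool) : Prop :=
  ∃ x, true :: (x ++ [true]) <:+: u ∧ false :: (x ++ [false]) <:+: v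

theorem HasBorderedPair.mono {u v u' v' : List Bool} (h : HasBorderedPair u v)
    (hu : u <:+: u') (hv : v <:+: v') : HasBorderedPair u' v' :=
  let ⟨x, hxu, hxv⟩ := h
  ⟨x, hxu.trans hu, hxv.trans hv⟩

/- The second conjunct is the state of the scan after a first mismatch `b`/`a` and a common word
`x`. -/
theorem hasBorderedPair_of_count_lt (u : List Bool) :
    (∀ v : List Bool, u.length = v.length → v.count true + 2 ≤ u.count true →
      HasBorderedPair u v) ∧
    (∀ x v : List Bool, u.length = v.length → v.count true + 1 ≤ u.count true →
      HasBorderedPair (true :: (x ++ u)) (false :: (x ++ v))) := by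
  induction u with
  | nil =>
    refine ⟨fun v hlen h => ?_, fun x v hlen h => ?_⟩ <;>
      simp [List.eq_nil_of_length_eq_zero hlen.symm] at h
  | cons c u ih =>
    obtain ⟨ihP, ihQ⟩ := ih
    constructor
    · rintro (_ | ⟨d, v⟩) hlen hcount
      · simp at hlen
      simp only [List.length_cons, Nat.add_right_cancel_iff] at hlen
      cases c <;> cases d <;>
        simp only [List.count_cons_self, List.count_cons_of_ne, ne_eq, Bool.false_eq_true,
          not_false_eq_true] at hcount
      case true.false => simpa using ihQ [] v hlen (by omega)
      all_goals
        exact (ihP v hlen (by omega)).mono (List.suffix_cons _ _).isInfix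
          (List.suffix_cons _ _).isInfix
    · rintro x (_ | ⟨d, v⟩) hlen hcount
      · simp at hlen
      simp only [List.length_cons, Nat.add_right_cancel_iff] at hlen
      cases c <;> cases d <;>
        simp only [List.count_cons_self, List.count_cons_of_ne, ne_eq, Bool.false_eq_true,
          not_false_eq_true] at hcount
      case true.false =>
        exact ⟨x, List.IsPrefix.isInfix ⟨u, by simp⟩, List.IsPrefix.isInfix ⟨v, by simp⟩⟩
      case false.true =>
        exact (ihP v hlen (by omega)).mono
          (List.IsSuffix.isInfix ⟨true :: (x ++ [false]), by simp⟩)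
          (List.IsSuffix.isInfix ⟨false :: (x ++ [true]), by simp⟩)
      case false.false => simpa using ihQ (x ++ [false]) v hlen hcount
      case true.true => simpa using ihQ (x ++ [true]) v hlen (by omega)

theorem IsFactor.of_infix {w : ℕ → Bool} {u v : List Bool} (hu : IsFactor w u)
    (hvu : v <:+: u) : IsFactor w v := by
  obtain ⟨i, hi⟩ := hu
  obtain ⟨s, t, rfl⟩ := hvu
  refine ⟨i + s.length, fun j => ?_⟩
  have := hi ⟨s.length + j, by simp; omega⟩
  simpa [Nat.add_assoc, List.getElem_append_left, List.getElem_append_right] using this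

theorem balanced_iff_no_axa_bxb_general (w : ℕ → Bool) :
    BalancedWord w ↔
      ¬ ∃ x : List Bool,
        IsFactor w (false :: (x ++ [false])) ∧ IsFactor w (true :: (x ++ [true])) := by
  constructor
  · rintro hbal ⟨x, hax, hbx⟩
    have h := hbal _ _ hbx hax (by simp)
    simp only [List.count_cons_self, List.count_cons_of_ne, List.count_append, ne_eq,
      Bool.false_eq_true, not_false_eq_true] at h
    rw [abs_le] at h
    push_cast at h
    omega
  · intro hno u v hu hv hlen
    have no_pair : ∀ u v, IsFactor w u → IsFactor w v → ¬ HasBorderedPair u v :=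
      fun u v hu hv ⟨x, hbx, hax⟩ => hno ⟨x, hv.of_infix hax, hu.of_infix hbx⟩
    rw [abs_le]
    constructor
    · by_contra! h
      exact no_pair v u hv hu ((hasBorderedPair_of_count_lt v).1 u hlen.symm (by omega))
    · by_contra! h
      exact no_pair u v hu hv ((hasBorderedPair_of_count_lt u).1 v hlen (by omega))

theorem balanced_iff_no_axa_bxb (w : ℕ → Bool) (hap : ¬ EventuallyPeriodic w) :
    BalancedWord w ↔
      ¬ ∃ x : List Bool,
        IsFactor w (false :: (x ++ [false])) ∧ IsFactor w (true :: (x ++ [true])) :=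
  balanced_iff_no_axa_bxb_general w

end StringBricks
end

section
/- Let w : ℕ → {a,b} be a right-infinite Sturmian word such that both a·w and b·w are Sturmian. Then there exists an irrational α ∈ (0,1) such that w equals the characteristic word c_α of slope α. -/
/-!
Let `f n` be the number of `b`s among the first `n` letters of `a·w`. Comparing a prefix of
`a·w` and of `b·w` with a factor of the same length at position `m` shows, by balancedness,
`f m + f n ≤ f (m + n) ≤ f m + f n + 1`. Such an almost additive sequence has a slope `α` with
`f n ≤ n α ≤ f n + 1` for all `n`. If `α = p / q` were rational, `q f n - n p` would be bounded
and monotone along steps of `q`, hence eventually `q`-periodic, and then so would be `a·w`.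
So `α` is irrational, the right-hand inequality is strict, `f n = ⌊n α⌋`, and the letters
`w n = f (n + 2) - f (n + 1)` are those of the characteristic word; `f 1 = 0` forces `0 < α < 1`.
-/

namespace StringBricks

def SturmianWord (w : ℕ → Bool) : Prop :=
  BalancedWord w ∧ ¬ EventuallyPeriodic w

open Finset

theorem exists_forall_ge_eq_of_monotone_of_bddAbove {g : ℕ → ℤ} (hg : Monotone g)
    (hb : BddAbove (Set.range g)) : ∃ N, ∀ n ≥ N, g n = g N := by
  obtain ⟨N, hN⟩ := Int.csSup_mem (Set.range_nonempty g) hb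
  exact ⟨N, fun n hn => le_antisymm (hN ▸ le_csSup hb ⟨n, rfl⟩) (hg hn)⟩

theorem exists_forall_ge_add_eq_of_le_add {D : ℕ → ℤ} {q : ℕ} (hD : ∀ n, D n ≤ D (n + q))
    (hb : BddAbove (Set.range D)) : ∃ N, ∀ n ≥ N, D (n + q) = D n := by
  obtain ⟨B, hB⟩ := hb
  -- Summing over windows of length `q` turns the `q`-step increase into a one-step one.
  set Φ : ℕ → ℤ := fun n => ∑ j ∈ range q, D (n + j)
  have hΦ_succ : ∀ n, Φ (n + 1) = Φ n + (D (n + q) - D n) := by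
    intro n
    have h := sum_range_succ' (fun j => D (n + j)) q
    rw [sum_range_succ] at h
    simp only [Φ, ← add_assoc, add_right_comm n _ 1, add_zero] at h ⊢
    linarith
  have hΦ_mono : Monotone Φ :=
    monotone_nat_of_le_succ fun n => by linarith [hΦ_succ n, hD n]
  have hΦ_bdd : BddAbove (Set.range Φ) := by
    refine ⟨q * B, ?_⟩
    rintro _ ⟨n, rfl⟩
    simpa using sum_le_sum fun j (_ : j ∈ range q) => hB ⟨n + j, rfl⟩
  obtain ⟨N, hN⟩ := exists_forall_ge_eq_of_monotone_of_bddAbove hΦ_mono hΦ_bdd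
  exact ⟨N, fun n hn => by linarith [hΦ_succ n, hN n hn, hN (n + 1) (by omega)]⟩

section Slope

variable {f : ℕ → ℕ}

theorem apply_zero_of_superadditive (hsup : ∀ m n, f m + f n ≤ f (m + n)) : f 0 = 0 := by
  simpa using hsup 0 0

theorem mul_apply_le_apply_mul (hsup : ∀ m n, f m + f n ≤ f (m + n)) (k n : ℕ) :
    k * f n ≤ f (k * n) := by
  induction k with
  | zero => simp
  | succ k ih =>
    rw [add_mul, add_mul, one_mul, one_mul]
    exact (Nat.add_le_add_right ih _).trans (hsup _ _)

theorem apply_mul_le_mul_apply_add_one (hsup : ∀ m n, f m + f n ≤ f (m + n))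
    (hsub : ∀ m n, f (m + n) ≤ f m + f n + 1) (k n : ℕ) : f (k * n) ≤ k * (f n + 1) := by
  induction k with
  | zero => simp [apply_zero_of_superadditive hsup]
  | succ k ih => rw [add_mul, add_mul, one_mul]; linarith [hsub (k * n) n]

theorem exists_slope (hsup : ∀ m n, f m + f n ≤ f (m + n))
    (hsub : ∀ m n, f (m + n) ≤ f m + f n + 1) :
    ∃ α : ℝ, ∀ n : ℕ, (f n : ℝ) ≤ n * α ∧ n * α ≤ f n + 1 := by
  have hcmp : ∀ m n : ℕ, (f (m + 1) : ℝ) / (m + 1) ≤ (f (n + 1) + 1) / (n + 1) := by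
    intro m n
    have h := (mul_apply_le_apply_mul hsup (n + 1) (m + 1)).trans
      (mul_comm (m + 1) (n + 1) ▸ apply_mul_le_mul_apply_add_one hsup hsub (m + 1) (n + 1))
    rw [div_le_div_iff₀ (by positivity) (by positivity), mul_comm _ ((m : ℝ) + 1),
      mul_comm (f (m + 1) : ℝ)]
    exact_mod_cast h
  have hbdd : BddAbove (Set.range fun m : ℕ => (f (m + 1) : ℝ) / (m + 1)) :=
    ⟨_, Set.forall_mem_range.2 fun m => hcmp m 0⟩
  refine ⟨⨆ m : ℕ, (f (m + 1) : ℝ) / (m + 1), fun n => ?_⟩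
  rcases n with _ | n
  · simp [apply_zero_of_superadditive hsup]
  have hpos : (0 : ℝ) < n + 1 := by positivity
  push_cast
  constructor
  · rw [mul_comm, ← div_le_iff₀ hpos]
    exact le_ciSup hbdd n
  · rw [mul_comm, ← le_div_iff₀ hpos]
    exact ciSup_le fun m => hcmp m n

theorem exists_forall_ge_apply_add_eq (hsup : ∀ m n, f m + f n ≤ f (m + n))
    (hsub : ∀ m n, f (m + n) ≤ f m + f n + 1) {α : ℝ}
    (hα : ∀ n : ℕ, (f n : ℝ) ≤ n * α ∧ n * α ≤ f n + 1) {p : ℤ} {q : ℕ} (hq : 0 < q)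
    (hpq : (q : ℝ) * α = p) : ∃ N, ∀ n ≥ N, (f (n + q) : ℤ) = f n + p := by
  set D : ℕ → ℤ := fun n => q * f n - n * p
  have hD : ∀ n, -(q : ℤ) ≤ D n ∧ D n ≤ 0 := by
    intro n
    have h₁ : (n : ℝ) * p = q * (n * α) := by rw [← hpq]; ring
    have h₂ : (q : ℝ) * f n ≤ n * p := by
      rw [h₁]; exact mul_le_mul_of_nonneg_left (hα n).1 (Nat.cast_nonneg q)
    have h₃ : (n : ℝ) * p ≤ q * f n + q := by
      rw [h₁]; linarith [mul_le_mul_of_nonneg_left (hα n).2 (Nat.cast_nonneg q)]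
    have h₂' : (q : ℤ) * f n ≤ n * p := by exact_mod_cast h₂
    have h₃' : (n : ℤ) * p ≤ q * f n + q := by exact_mod_cast h₃
    constructor <;> · simp only [D]; linarith
  have hfq : (f q : ℤ) = p ∨ (f q : ℤ) + 1 = p := by
    have h₁ : (f q : ℤ) ≤ p := by exact_mod_cast hpq ▸ (hα q).1
    have h₂ : p ≤ (f q : ℤ) + 1 := by exact_mod_cast hpq ▸ (hα q).2
    omega
  have hstep : ∀ n, D (n + q) - D n = q * ((f (n + q) : ℤ) - f n - p) := by
    intro n; simp only [D]; push_cast; ring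
  obtain ⟨N, hN⟩ : ∃ N, ∀ n ≥ N, D (n + q) = D n := by
    rcases hfq with hfq | hfq
    · have hle : ∀ n, D n ≤ D (n + q) := fun n => by
        rw [← sub_nonneg, hstep n]
        exact mul_nonneg (Nat.cast_nonneg q) (by have := hsup n q; omega)
      exact exists_forall_ge_add_eq_of_le_add hle ⟨0, by rintro _ ⟨n, rfl⟩; exact (hD n).2⟩
    · have hle : ∀ n, -D n ≤ -D (n + q) := fun n => by
        rw [← sub_nonneg, neg_sub_neg, ← neg_sub, hstep n, neg_nonneg]
        exact mul_nonpos_of_nonneg_of_nonpos (Nat.cast_nonneg q) (by have := hsub n q; omega)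
      obtain ⟨N, hN⟩ := exists_forall_ge_add_eq_of_le_add (D := fun n => -D n) hle
        ⟨q, by rintro _ ⟨n, rfl⟩; linarith [(hD n).1]⟩
      exact ⟨N, fun n hn => neg_inj.1 (hN n hn)⟩
  refine ⟨N, fun n hn => ?_⟩
  have := hstep n
  rw [hN n hn, sub_self, zero_eq_mul] at this
  omega

theorem floor_mul_eq_of_irrational {α : ℝ} (hα : ∀ n : ℕ, (f n : ℝ) ≤ n * α ∧ n * α ≤ f n + 1)
    (hirr : Irrational α) (n : ℕ) : ⌊(n : ℝ) * α⌋ = f n := by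
  rw [Int.floor_eq_iff]
  refine ⟨mod_cast (hα n).1, lt_of_le_of_ne (mod_cast (hα n).2) ?_⟩
  rcases eq_or_ne n 0 with rfl | hn
  · rw [Nat.cast_zero, zero_mul]; exact (Nat.cast_add_one_pos _).ne
  · exact_mod_cast (hirr.natCast_mul hn).ne_nat (f n + 1)

end Slope

section Weight

def weight (v : ℕ → Bool) (n : ℕ) : ℕ := ∑ i ∈ range n, (v i).toNat

variable {v : ℕ → Bool}

@[simp]
theorem weight_zero : weight v 0 = 0 := rfl

theorem weight_succ (n : ℕ) : weight v (n + 1) = weight v n + (v n).toNat :=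
  sum_range_succ _ n

theorem weight_add_count_ofFn (i n : ℕ) :
    weight v i + (List.ofFn fun j : Fin n => v (i + j)).count true = weight v (i + n) := by
  induction n with
  | zero => simp
  | succ n ih =>
    rw [List.ofFn_succ', List.concat_eq_append, List.count_append, ← add_assoc,
      ← Nat.add_assoc i, weight_succ]
    simp only [Fin.val_castSucc, Fin.val_last, ih]
    cases v (i + n) <;> simp

theorem BalancedWord.weight_window_le (hv : BalancedWord v) (i j n : ℕ) :
    (weight v (i + n) : ℤ) - weight v i ≤ weight v (j + n) - weight v j + 1 := by
  have hfac : ∀ k, IsFactor v (List.ofFn fun l : Fin n => v (k + l)) :=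
    fun k => ⟨k, fun l => by simp⟩
  have h := (abs_le.1 (hv _ _ (hfac i) (hfac j) (by simp))).2
  have hi := weight_add_count_ofFn (v := v) i n
  have hj := weight_add_count_ofFn (v := v) j n
  omega

theorem BalancedWord.weight_add_le (hv : BalancedWord v) (m n : ℕ) :
    weight v (m + n) ≤ weight v m + weight v n + 1 := by
  have := hv.weight_window_le m 0 n
  simp only [zero_add, weight_zero, Nat.cast_zero, sub_zero] at this
  omega

theorem weight_consWord_succ (ℓ : Bool) (w : ℕ → Bool) (n : ℕ) :
    weight (consWord ℓ w) (n + 1) = ℓ.toNat + weight w n := by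
  induction n with
  | zero => rfl
  | succ n ih => rw [weight_succ, ih, weight_succ, add_assoc]; rfl

/-- A prefix of `b·w` has one more `b` than the prefix of `a·w`, which sharpens by one the
bound given by balancedness. -/
theorem weight_add_le_weight_consWord {w : ℕ → Bool} (hb : BalancedWord (consWord true w))
    (m n : ℕ) :
    weight (consWord false w) m + weight (consWord false w) n ≤
      weight (consWord false w) (m + n) := by
  rcases m with _ | m
  · simp
  rcases n with _ | n
  · simp
  have := hb.weight_window_le 0 (m + 1) (n + 1)
  rw [show m + 1 + (n + 1) = m + n + 1 + 1 by omega] at this ⊢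
  simp only [weight_consWord_succ, zero_add, weight_zero, Bool.toNat_true,
    Bool.toNat_false] at this ⊢
  omega

theorem eventuallyPeriodic_of_weight_add_eq {N q : ℕ} {p : ℤ} (hq : 0 < q)
    (h : ∀ n ≥ N, (weight v (n + q) : ℤ) = weight v n + p) : EventuallyPeriodic v := by
  refine ⟨N, q, hq, fun n hn => ?_⟩
  have h₁ := h (n + 1) (by omega)
  rw [add_right_comm, weight_succ, weight_succ] at h₁
  push_cast at h₁
  rw [h n hn] at h₁
  have hletter : (v (n + q)).toNat = (v n).toNat := by omega
  revert hletter
  cases v (n + q) <;> cases v n <;> simp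

end Weight

theorem characteristic_of_both_cons_sturmian_general (w : ℕ → Bool)
    (haw : SturmianWord (consWord false w))
    (hbw : SturmianWord (consWord true w)) :
    ∃ α : ℝ, Irrational α ∧ 0 < α ∧ α < 1 ∧ w = charWord α := by
  have hsup := weight_add_le_weight_consWord hbw.1
  have hsub := haw.1.weight_add_le
  obtain ⟨α, hα⟩ := exists_slope hsup hsub
  have hirr : Irrational α := by
    rintro ⟨r, rfl⟩
    obtain ⟨N, hN⟩ := exists_forall_ge_apply_add_eq hsup hsub hα (p := r.num) r.den_pos
      (by exact_mod_cast r.den_mul_eq_num)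
    exact haw.2 (eventuallyPeriodic_of_weight_add_eq r.den_pos hN)
  have h₁ := hα 1
  simp only [show weight (consWord false w) 1 = 0 from rfl, Nat.cast_one, one_mul,
    Nat.cast_zero, zero_add] at h₁
  refine ⟨α, hirr, h₁.1.lt_of_ne hirr.ne_zero.symm, h₁.2.lt_of_ne hirr.ne_one, ?_⟩
  funext n
  have hfloor := floor_mul_eq_of_irrational hα hirr
  have hn₁ : (n : ℝ) + 1 = (n + 1 : ℕ) := by push_cast; ring
  have hn₂ : (n : ℝ) + 2 = (n + 2 : ℕ) := by push_cast; ring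
  have hletter : weight (consWord false w) (n + 2) =
      weight (consWord false w) (n + 1) + (w n).toNat := weight_succ (n + 1)
  simp only [charWord, hn₁, hn₂, hfloor, hletter]
  cases w n <;> simp

theorem characteristic_of_both_cons_sturmian (w : ℕ → Bool)
    (hw : SturmianWord w) (haw : SturmianWord (consWord false w))
    (hbw : SturmianWord (consWord true w)) :
    ∃ α : ℝ, Irrational α ∧ 0 < α ∧ α < 1 ∧ w = charWord α :=
  characteristic_of_both_cons_sturmian_general w haw hbw

end StringBricks
end
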